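/- arXiv:2105.10514 — 9 statements merged into one kernel-verified Lean document; each statement's English description precedes it below -/
import Mathlib

section
/- For any integer p > 0 and real (or complex) numbers r, σ, the identity ∑_{j=0}^{p} [(p-1)!·(2p-j)! / (j!·(p-j)!·(2p-j-1)!)] · r^{p-j} · (-2σ)^j = 2·(r-σ)·(r-2σ)^{p-1} holds. -/
open Finset Nat

lemma ladder_aux_pow {K : Type*} [Field K] (n : ℕ) (x y : K) :
    ∑ j ∈ Finset.range (n + 1), (n.choose j : K) * x ^ (n - j) * y ^ j
      = (x + y) ^ n := by
  rw [add_comm x y, add_pow]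
  apply Finset.sum_congr rfl
  intro j hj
  ring

lemma ladder_aux_deriv {K : Type*} [Field K] (p : ℕ) (hp : 0 < p) (x y : K) :
    ∑ j ∈ Finset.range (p + 1), (j : K) * (p.choose j : K) * x ^ (p - j) * y ^ j
      = p * y * (x + y) ^ (p - 1) := by
  rw [Finset.sum_range_succ']
  simp only [Nat.cast_zero, zero_mul, pow_zero, mul_one, add_zero]
  have key : ∀ i, ((i + 1 : ℕ) : K) * (p.choose (i + 1) : K) = (p : K) * ((p - 1).choose i : K) := by
    intro i
    have hps : p - 1 + 1 = p := by omega
    have := Nat.add_one_mul_choose_eq (p - 1) i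
    rw [hps] at this
    have h2 := congrArg (fun n : ℕ => (n : K)) this
    push_cast at h2
    push_cast
    linear_combination -h2
  calc ∑ i ∈ Finset.range p, ((i + 1 : ℕ) : K) * (p.choose (i + 1) : K) * x ^ (p - (i + 1)) * y ^ (i + 1)
      = ∑ i ∈ Finset.range p, (p : K) * y * (((p - 1).choose i : K) * x ^ ((p - 1) - i) * y ^ i) := by
        apply Finset.sum_congr rfl
        intro i hi
        rw [key i]
        have hlt : i < p := Finset.mem_range.mp hi
        have hsub : p - (i + 1) = (p - 1) - i := by omega
        rw [hsub]
        ring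
    _ = p * y * (x + y) ^ (p - 1) := by
        rw [← Finset.mul_sum]
        congr 1
        have hr : p = (p - 1) + 1 := by omega
        rw [hr]
        exact ladder_aux_pow (p - 1) x y

lemma ladder_coeff {K : Type*} [Field K] [CharZero K] (p j : ℕ) (hp : 0 < p) (hj : j ≤ p) :
    (((p - 1) ! * (2 * p - j) ! : ℕ) : K) / (((j ! * (p - j) ! * (2 * p - j - 1) ! : ℕ)) : K)
      = ((2 * p - j : ℕ) : K) * (p.choose j : K) / (p : K) := by
  have h1 : 0 < 2 * p - j := by omega
  have hnat : ((p - 1) ! * (2 * p - j) !) * p = ((2 * p - j) * p.choose j) * (j ! * (p - j) ! * (2 * p - j - 1) !) := by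
    have hfact : (2 * p - j) ! = (2 * p - j) * (2 * p - j - 1) ! :=
      (Nat.mul_factorial_pred h1.ne').symm
    have hchoose : p.choose j * (j ! * (p - j) !) = p ! := by
      rw [← mul_assoc]; exact Nat.choose_mul_factorial_mul_factorial hj
    have hpfact : p ! = p * (p - 1) ! := (Nat.mul_factorial_pred hp.ne').symm
    calc ((p - 1) ! * (2 * p - j) !) * p
        = (p * (p - 1) !) * (2 * p - j) ! := by ring
      _ = p ! * ((2 * p - j) * (2 * p - j - 1) !) := by rw [← hpfact, hfact]
      _ = (p.choose j * (j ! * (p - j) !)) * ((2 * p - j) * (2 * p - j - 1) !) := by rw [hchoose]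
      _ = ((2 * p - j) * p.choose j) * (j ! * (p - j) ! * (2 * p - j - 1) !) := by ring
  have hK := congrArg (fun n : ℕ => (n : K)) hnat
  push_cast at hK
  have hd1 : ((j ! * (p - j) ! * (2 * p - j - 1) ! : ℕ) : K) ≠ 0 :=
    Nat.cast_ne_zero.mpr (by positivity)
  have hd2 : (p : K) ≠ 0 := Nat.cast_ne_zero.mpr hp.ne'
  rw [div_eq_div_iff hd1 hd2]
  push_cast
  linear_combination hK

/-- Combinatorial identity used to simplify the integral representation of ladder
integrals: for any integer `p > 0` and elements `r σ` of a field of characteristic zero,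
`∑_{j=0}^{p} (p-1) !(2p-j) !/(j!(p-j) !(2p-j-1) !) r^{p-j} (-2σ)^j = 2(r-σ)(r-2σ)^{p-1}`. -/
theorem ladder_combinatorial_identity {K : Type*} [Field K] [CharZero K]
    (p : ℕ) (hp : 0 < p) (r σ : K) :
    ∑ j ∈ Finset.range (p + 1),
      (((p - 1) ! * (2 * p - j) ! : ℕ) : K) / (((j ! * (p - j) ! * (2 * p - j - 1) ! : ℕ)) : K)
        * r ^ (p - j) * (-2 * σ) ^ j
      = 2 * (r - σ) * (r - 2 * σ) ^ (p - 1) := by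
  set y : K := -2 * σ with hy
  have hd2 : (p : K) ≠ 0 := Nat.cast_ne_zero.mpr hp.ne'
  have step : ∑ j ∈ Finset.range (p + 1),
      (((p - 1) ! * (2 * p - j) ! : ℕ) : K) / (((j ! * (p - j) ! * (2 * p - j - 1) ! : ℕ)) : K)
        * r ^ (p - j) * y ^ j
      = (2 * p : K) / p * ∑ j ∈ Finset.range (p + 1), (p.choose j : K) * r ^ (p - j) * y ^ j
        - (1 : K) / p * ∑ j ∈ Finset.range (p + 1), (j : K) * (p.choose j : K) * r ^ (p - j) * y ^ j := by
    rw [Finset.mul_sum, Finset.mul_sum, ← Finset.sum_sub_distrib]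
    apply Finset.sum_congr rfl
    intro j hj
    have hjp : j ≤ p := Nat.lt_succ_iff.mp (Finset.mem_range.mp hj)
    rw [ladder_coeff p j hp hjp]
    have hcast : ((2 * p - j : ℕ) : K) = 2 * p - j := by
      have : j ≤ 2 * p := by omega
      push_cast [this]
      ring
    rw [hcast]
    field_simp
  rw [step, ladder_aux_pow, ladder_aux_deriv p hp]
  have hpow : (r + y) ^ p = (r + y) * (r + y) ^ (p - 1) := by
    conv_lhs => rw [show p = p - 1 + 1 by omega]
    rw [pow_succ]
    ring
  rw [hpow]
  have : r + y = r - 2 * σ := by rw [hy]; ring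
  rw [this]
  field_simp
  ring
end

section
/- For integers m, n with n ≥ m ≥ 1, the determinant of the m×m Hankel matrix with (i,j)-entry (i+j+n−m−2)! equals G(m+1)·G(n+1)/G(n−m+1), where G(z+1) = ∏_{i=0}^{z−1} i! is the Barnes G-function restricted to positive integers. -/
open Finset Nat

lemma hankel_sum_aux (i j k m : ℕ) (hj : j < m) :
    ∑ l ∈ Finset.range m, i.choose l * (if l ≤ j then (k + j).choose (j - l) else 0)
      = (i + j + k).choose j := by
  rw [← Finset.sum_subset (Finset.range_subset_range.2 hj)]
  · have hcong : ∀ l ∈ Finset.range (j + 1),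
        i.choose l * (if l ≤ j then (k + j).choose (j - l) else 0)
          = i.choose l * (k + j).choose (j - l) := by
      intro l hl
      rw [if_pos (Nat.lt_succ_iff.mp (Finset.mem_range.mp hl))]
    rw [Finset.sum_congr rfl hcong]
    have h := Nat.add_choose_eq i (k + j) j
    rw [Finset.Nat.sum_antidiagonal_eq_sum_range_succ_mk] at h
    have harg : i + (k + j) = i + j + k := by ring
    rw [harg] at h
    exact h.symm
  · intro l _ hl
    rw [if_neg (by simp only [Finset.mem_range, Nat.lt_succ_iff] at hl; omega), mul_zero]

/-- For `n ≥ m ≥ 1`, the determinant of the `m × m` Hankel matrix with (1-indexed) entries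
`(i + j + n − m − 2)!` equals `G(m+1)·G(n+1)/G(n−m+1)`, where `G(z+1) = ∏_{i=0}^{z-1} i!`
is the Barnes G-function restricted to positive integers. -/
theorem det_hankel_factorial (m n : ℕ) (hm : 1 ≤ m) (hmn : m ≤ n) :
    Matrix.det (Matrix.of fun i j : Fin m => (((i : ℕ) + (j : ℕ) + n - m)! : ℚ))
      = (∏ i ∈ Finset.range m, (i ! : ℚ)) * (∏ i ∈ Finset.range n, (i ! : ℚ))
        / ∏ i ∈ Finset.range (n - m), (i ! : ℚ) := by
  obtain ⟨k, rfl⟩ : ∃ k, n = k + m := ⟨n - m, by omega⟩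
  have hk : k + m - m = k := by omega
  rw [hk]
  set A : Matrix (Fin m) (Fin m) ℚ :=
    Matrix.of fun i l : Fin m => ((i : ℕ).choose (l : ℕ) : ℚ) with hA
  set B : Matrix (Fin m) (Fin m) ℚ :=
    Matrix.of fun l j : Fin m =>
      if (l : ℕ) ≤ (j : ℕ) then ((k + (j : ℕ)).choose ((j : ℕ) - (l : ℕ)) : ℚ) else 0 with hB
  have hfac : Matrix.of (fun i j : Fin m => (((i : ℕ) + (j : ℕ) + (k + m) - m)! : ℚ))
      = Matrix.diagonal (fun i : Fin m => (((i : ℕ) + k)! : ℚ)) * (A * B)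
        * Matrix.diagonal (fun j : Fin m => ((j : ℕ)! : ℚ)) := by
    ext i j
    simp only [Matrix.of_apply]
    rw [Matrix.mul_diagonal, Matrix.diagonal_mul, Matrix.mul_apply]
    have harg : (i : ℕ) + (j : ℕ) + (k + m) - m = (i : ℕ) + (j : ℕ) + k := by omega
    rw [harg]
    have hsum : ∑ l : Fin m, A i l * B l j
        = ((((i : ℕ) + (j : ℕ) + k).choose (j : ℕ) : ℕ) : ℚ) := by
      have h := congrArg (Nat.cast : ℕ → ℚ) (hankel_sum_aux (i : ℕ) (j : ℕ) k m j.isLt)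
      push_cast [apply_ite (Nat.cast : ℕ → ℚ)] at h
      rw [← Fin.sum_univ_eq_sum_range] at h
      simpa [hA, hB] using h
    rw [hsum]
    have hc := Nat.choose_mul_factorial_mul_factorial
      (show (j : ℕ) ≤ (i : ℕ) + (j : ℕ) + k by omega)
    have harg2 : (i : ℕ) + (j : ℕ) + k - (j : ℕ) = (i : ℕ) + k := by omega
    rw [harg2] at hc
    have := congrArg (Nat.cast : ℕ → ℚ) hc
    push_cast at this
    linarith [this]
  rw [hfac, Matrix.det_mul, Matrix.det_mul, Matrix.det_mul,
    Matrix.det_diagonal, Matrix.det_diagonal]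
  have hdetA : A.det = 1 := by
    rw [Matrix.det_of_lowerTriangular A (by
      intro i j hij
      simp only [hA, Matrix.of_apply]
      rw [Nat.choose_eq_zero_of_lt (by exact_mod_cast hij), Nat.cast_zero])]
    simp [hA]
  have hdetB : B.det = 1 := by
    rw [Matrix.det_of_upperTriangular (by
      intro i j hij
      simp only [hB, Matrix.of_apply]
      rw [if_neg (by exact Nat.not_le.mpr hij)])]
    simp [hB]
  rw [hdetA, hdetB]
  have hprod : ∏ i ∈ Finset.range (k + m), (i ! : ℚ)
      = (∏ i ∈ Finset.range k, (i ! : ℚ)) * ∏ i ∈ Finset.range m, ((k + i)! : ℚ) := by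
    rw [Finset.prod_range_add]
  have h1 : ∏ i : Fin m, (((i : ℕ) + k)! : ℚ) = ∏ i ∈ Finset.range m, ((k + i)! : ℚ) := by
    rw [Fin.prod_univ_eq_prod_range (fun i => ((i + k)! : ℚ))]
    exact Finset.prod_congr rfl fun i _ => by rw [Nat.add_comm]
  have h2 : ∏ i : Fin m, (((i : ℕ))! : ℚ) = ∏ i ∈ Finset.range m, (i ! : ℚ) :=
    Fin.prod_univ_eq_prod_range (fun i => (i ! : ℚ)) m
  rw [h1, h2, hprod]
  have hne : (∏ i ∈ Finset.range k, (i ! : ℚ)) ≠ 0 :=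
    Finset.prod_ne_zero_iff.2 fun i _ => Nat.cast_ne_zero.2 (Nat.factorial_ne_zero i)
  field_simp
end

section
/- The determinant of the m×m Hankel matrix with (i,j)-entry (i+j−2)! equals (∏_{k=0}^{m−1} k!)², i.e., G(m+1)² where G is the Barnes G-function on integers. -/
open Finset Nat

lemma vandermonde_sq (i j m : ℕ) (hi : i < m) :
    ∑ k ∈ Finset.range m, i.choose k * j.choose k = (i + j).choose i := by
  rw [Nat.add_choose_eq, Finset.Nat.sum_antidiagonal_eq_sum_range_succ_mk]
  rw [← Finset.sum_range_add_sum_Ico _ (Nat.succ_le_of_lt hi)]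
  have h2 : ∑ k ∈ Finset.Ico (i+1) m, i.choose k * j.choose k = 0 :=
    Finset.sum_eq_zero fun k hk => by
      simp [Nat.choose_eq_zero_of_lt (Finset.mem_Ico.mp hk).1]
  rw [h2, add_zero, ← Finset.sum_range_reflect]
  apply Finset.sum_congr rfl
  intro k hk
  have hk' : k ≤ i := Nat.lt_succ_iff.mp (Finset.mem_range.mp hk)
  have : i + 1 - 1 - k = i - k := by omega
  rw [this, Nat.choose_symm hk']

lemma hankel_entry (i j m : ℕ) (hi : i < m) :
    ∑ k ∈ Finset.range m, (i.choose k * i !) * (j.choose k * j !) = (i + j)! := by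
  calc ∑ k ∈ Finset.range m, (i.choose k * i !) * (j.choose k * j !)
      = (∑ k ∈ Finset.range m, i.choose k * j.choose k) * (i ! * j !) := by
        rw [Finset.sum_mul]; exact Finset.sum_congr rfl fun k _ => by ring
    _ = (i + j).choose i * (i ! * j !) := by rw [vandermonde_sq i j m hi]
    _ = (i + j)! := by
        rw [Nat.choose_symm_add, ← Nat.add_choose_mul_factorial_mul_factorial i j]; ring

/-- The determinant of the `m × m` Hankel matrix with (1-indexed) entries `(i+j−2)!`
equals `(∏_{k=0}^{m−1} k!)² = G(m+1)²`, where `G` is the Barnes G-function on integers. -/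
theorem det_hankel_factorial_square (m : ℕ) :
    Matrix.det (Matrix.of fun i j : Fin m => (((i : ℕ) + (j : ℕ))! : ℤ))
      = (∏ k ∈ Finset.range m, (k ! : ℤ)) ^ 2 := by
  set B : Matrix (Fin m) (Fin m) ℤ :=
    Matrix.of fun i k : Fin m => (((i : ℕ).choose k * (i : ℕ)!) : ℤ) with hB
  have hfac : Matrix.of (fun i j : Fin m => (((i : ℕ) + (j : ℕ))! : ℤ))
      = B * B.transpose := by
    ext i j
    simp only [Matrix.mul_apply, Matrix.transpose_apply, Matrix.of_apply, hB]
    rw [Fin.sum_univ_eq_sum_range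
      (fun k => (((i : ℕ).choose k : ℤ)) * ((i : ℕ)! : ℤ) * ((((j : ℕ).choose k : ℤ)) * ((j : ℕ)! : ℤ)))]
    exact_mod_cast (hankel_entry (i : ℕ) (j : ℕ) m i.isLt).symm
  rw [hfac, Matrix.det_mul, Matrix.det_transpose]
  have hlt : B.BlockTriangular (OrderDual.toDual) := by
    intro i j hij
    have : (i : ℕ) < (j : ℕ) := hij
    simp [hB, Nat.choose_eq_zero_of_lt this]
  rw [Matrix.det_of_lowerTriangular B hlt]
  have hdiag : ∏ i : Fin m, B i i = ∏ k ∈ Finset.range m, (k ! : ℤ) := by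
    have : ∀ i : Fin m, B i i = ((i : ℕ)! : ℤ) := fun i => by
      simp [hB]
    simp only [this]
    exact Fin.prod_univ_eq_prod_range (fun n => ((n)! : ℤ)) m
  rw [hdiag, sq]
end

section
/- The generalized Laguerre polynomials L_k^{(ℓ)}(r) = (r^{−ℓ} e^r / k!) · d^k/dr^k (e^{−r} r^{k+ℓ}) satisfy the orthogonality relation ∫_0^∞ r^ℓ e^{−r} L_k^{(ℓ)}(r) L_l^{(ℓ)}(r) dr = ((k+ℓ)!/k!) · δ_{k,l} for nonnegative integers k, l and nonnegative integer ℓ. -/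
open Finset Nat Real MeasureTheory

/-- The generalized Laguerre polynomial `L_k^{(ℓ)}(r)` defined by the Rodrigues formula
`L_k^{(ℓ)}(r) = (r^{−ℓ} e^r / k!) · d^k/dr^k (e^{−r} r^{k+ℓ})`. -/
noncomputable def genLaguerre (ℓ k : ℕ) (r : ℝ) : ℝ :=
  (r ^ ℓ)⁻¹ * Real.exp r / (k !) *
    iteratedDeriv k (fun t : ℝ => Real.exp (-t) * t ^ (k + ℓ)) r

section aux
open Set Polynomial
noncomputable def Dend : Module.End ℝ (Polynomial ℝ) := Polynomial.derivative

noncomputable def Qpoly (m k : ℕ) : Polynomial ℝ := ((Dend - 1) ^ k) (Polynomial.X ^ m)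

lemma Qpoly_succ (m k : ℕ) :
    Qpoly m (k+1) = (Qpoly m k).derivative - Qpoly m k := by
  rw [Qpoly, show (Dend - 1)^(k+1) = (Dend - 1) * (Dend - 1)^k from pow_succ' _ k,
    Module.End.mul_apply]
  rfl

lemma iteratedDeriv_exp_mul_pow (m k : ℕ) :
    iteratedDeriv k (fun t : ℝ => Real.exp (-t) * t ^ m)
      = fun r => Real.exp (-r) * (Qpoly m k).eval r := by
  induction k with
  | zero => simp [Qpoly, Dend]
  | succ k ih =>
    rw [iteratedDeriv_succ, ih]
    funext r
    have h1 : HasDerivAt (fun r : ℝ => Real.exp (-r) * (Qpoly m k).eval r)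
        ((Real.exp (-r)) * (-1) * (Qpoly m k).eval r
          + Real.exp (-r) * ((Qpoly m k).derivative.eval r)) r :=
      (((Real.hasDerivAt_exp (-r)).comp r ((hasDerivAt_neg r))).mul
        ((Qpoly m k).hasDerivAt r))
    rw [h1.deriv, Qpoly_succ]
    simp [Polynomial.eval_sub]
    ring

lemma Qpoly_eq (m k : ℕ) :
    Qpoly m k = ∑ j ∈ range (k+1),
      ((-1:ℝ)^(k-j) * (k.choose j) * (m.descFactorial j)) • Polynomial.X ^ (m - j) := by
  have hc : Commute Dend (-1 : Module.End ℝ (Polynomial ℝ)) := Commute.neg_one_right Dend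
  have h := hc.add_pow k
  rw [Qpoly, sub_eq_add_neg, h, LinearMap.sum_apply]
  refine Finset.sum_congr rfl fun j hj => ?_
  have hneg : ((-1 : Module.End ℝ (Polynomial ℝ)) ^ (k - j)) = ((-1:ℝ)^(k-j)) • 1 := by
    rw [show (-1 : Module.End ℝ (Polynomial ℝ)) = (-1:ℝ) • 1 from (neg_one_smul ℝ (1 : Module.End ℝ (Polynomial ℝ))).symm,
      _root_.smul_pow, one_pow]
  rw [hneg]
  simp only [Module.End.mul_apply, LinearMap.smul_apply, Module.End.one_apply]
  rw [Module.End.natCast_apply, _root_.map_smul, map_nsmul, Module.End.pow_apply]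
  show _ • (k.choose j) • derivative^[j] (X ^ m : Polynomial ℝ) = _
  rw [Polynomial.iterate_derivative_X_pow_eq_smul, ← Nat.cast_smul_eq_nsmul ℝ,
    smul_smul, smul_smul]

lemma genLaguerre_eq (ℓ k : ℕ) {r : ℝ} (hr : 0 < r) :
    genLaguerre ℓ k r = ∑ i ∈ range (k+1), (-1:ℝ)^i * ((k+ℓ).choose (k-i)) / i ! * r ^ i := by
  have hr0 : r ≠ 0 := ne_of_gt hr
  rw [genLaguerre, iteratedDeriv_exp_mul_pow, Qpoly_eq]
  simp only [Polynomial.eval_finset_sum, Polynomial.eval_smul, Polynomial.eval_pow,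
    Polynomial.eval_X, smul_eq_mul]
  rw [← Finset.sum_range_reflect (fun i => (-1:ℝ)^i * ((k+ℓ).choose (k-i)) / i ! * r ^ i) (k+1)]
  simp only [Finset.mul_sum]
  refine Finset.sum_congr rfl fun j hj => ?_
  rw [Finset.mem_range] at hj
  have hjk : j ≤ k := Nat.lt_succ_iff.mp hj
  have h1 : k + 1 - 1 - j = k - j := by omega
  rw [h1]
  have h2 : k - (k - j) = j := by omega
  have h3 : k + ℓ - j = ℓ + (k - j) := by omega
  rw [h2, h3]
  have hd : (((k+ℓ).descFactorial j : ℕ) : ℝ) = (j ! : ℝ) * ((k+ℓ).choose j : ℝ) := by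
    rw [Nat.descFactorial_eq_factorial_mul_choose]; push_cast; ring
  have hid : ((k.choose j * j ! * (k - j)! : ℕ) : ℝ) = ((k ! : ℕ) : ℝ) := by
    exact_mod_cast congrArg (Nat.cast : ℕ → ℝ) (Nat.choose_mul_factorial_mul_factorial hjk)
  push_cast at hid
  have e1 : Real.exp r * Real.exp (-r) = 1 := by rw [← Real.exp_add]; simp
  have e2 : (r^ℓ)⁻¹ * r^ℓ = 1 := inv_mul_cancel₀ (pow_ne_zero ℓ hr0)
  have hpow : r ^ (ℓ + (k - j)) = r ^ ℓ * r ^ (k - j) := pow_add r ℓ (k-j)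
  rw [hpow, hd]
  field_simp
  linear_combination ((k.choose j : ℝ) * (j ! : ℝ) *
      ((k+ℓ).choose j : ℝ) * ((k-j)! : ℝ)) * e1
    + ((k+ℓ).choose j : ℝ) * hid


lemma integrable_pow_mul_exp (n : ℕ) :
    IntegrableOn (fun r : ℝ => r ^ n * Real.exp (-r)) (Set.Ioi 0) := by
  have h := Real.GammaIntegral_convergent (s := n + 1) (by positivity)
  refine h.congr_fun (fun x hx => ?_) measurableSet_Ioi
  rw [add_sub_cancel_right]; beta_reduce; rw [Real.rpow_natCast]; ring

lemma integral_pow_mul_exp (n : ℕ) :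
    ∫ r in Set.Ioi (0 : ℝ), r ^ n * Real.exp (-r) = n ! := by
  have h := Real.Gamma_eq_integral (s := n + 1) (by positivity)
  rw [Real.Gamma_nat_eq_factorial] at h
  rw [h]
  refine setIntegral_congr_fun measurableSet_Ioi (fun x hx => ?_)
  rw [add_sub_cancel_right, Real.rpow_natCast]; ring

lemma alt_sum_succ (l : ℕ) (f : ℕ → ℝ) :
    ∑ j ∈ range (l+2), (-1:ℝ)^j * ((l+1).choose j) * f j
      = - ∑ j ∈ range (l+1), (-1:ℝ)^j * (l.choose j) * (f (j+1) - f j) := by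
  have h0 : ∑ j ∈ range (l+2), (-1:ℝ)^j * ((l+1).choose j) * f j
      = (∑ j ∈ range (l+1), (-1:ℝ)^(j+1) * ((l+1).choose (j+1)) * f (j+1))
        + (-1:ℝ)^0 * (((l+1).choose 0 : ℕ)) * f 0 := Finset.sum_range_succ' _ _
  have h1 : ∑ j ∈ range (l+1), (-1:ℝ)^j * (l.choose j) * f j
      = (∑ j ∈ range l, (-1:ℝ)^(j+1) * ((l.choose (j+1) : ℕ)) * f (j+1))
        + (-1:ℝ)^0 * ((l.choose 0 : ℕ)) * f 0 := Finset.sum_range_succ' _ _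
  have h2 : ∑ j ∈ range (l+1), (-1:ℝ)^(j+1) * ((l.choose (j+1) : ℕ)) * f (j+1)
      = ∑ j ∈ range l, (-1:ℝ)^(j+1) * ((l.choose (j+1) : ℕ)) * f (j+1) := by
    rw [Finset.sum_range_succ, Nat.choose_succ_self]
    simp
  have h3 : ∀ j ∈ range (l+1), (-1:ℝ)^(j+1) * (((l+1).choose (j+1) : ℕ)) * f (j+1)
      = (-1:ℝ)^(j+1) * ((l.choose j : ℕ)) * f (j+1)
        + (-1:ℝ)^(j+1) * ((l.choose (j+1) : ℕ)) * f (j+1) := by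
    intro j _
    rw [Nat.choose_succ_succ]
    push_cast
    ring
  rw [h0, Finset.sum_congr rfl h3, Finset.sum_add_distrib, h2]
  have h4 : ∀ j ∈ range (l+1), (-1:ℝ)^j * (l.choose j) * (f (j+1) - f j)
      = -((-1:ℝ)^(j+1) * (l.choose j) * f (j+1)) - (-1:ℝ)^j * (l.choose j) * f j := by
    intro j _; ring
  rw [Finset.sum_congr rfl h4, Finset.sum_sub_distrib, h1]
  simp only [Nat.choose_zero_right, pow_zero, Nat.cast_one, one_mul,
    Finset.sum_neg_distrib]
  ring

lemma prod_diff (i : ℕ) (c x : ℝ) :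
    (∏ t ∈ range (i+1), (c + (x+1) + t + 1)) - ∏ t ∈ range (i+1), (c + x + t + 1)
      = (i+1) * ∏ t ∈ range i, ((c+1) + x + t + 1) := by
  rw [Finset.prod_range_succ, Finset.prod_range_succ' (fun t => (c + x + (t : ℕ) + 1))]
  have e1 : ∀ t ∈ range i, c + (x+1) + (t:ℝ) + 1 = (c+1) + x + t + 1 := fun t _ => by ring
  have e2 : ∀ t ∈ range i, c + x + ((t+1 : ℕ) : ℝ) + 1 = (c+1) + x + t + 1 := fun t _ => by
    push_cast; ring
  rw [Finset.prod_congr rfl e1, Finset.prod_congr rfl e2]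
  push_cast
  ring

lemma key_sum (l : ℕ) : ∀ (i : ℕ) (c : ℝ), i ≤ l →
    ∑ j ∈ range (l+1), (-1:ℝ)^j * (l.choose j) * ∏ t ∈ range i, (c + j + t + 1)
      = if i = l then (-1:ℝ)^l * l ! else 0 := by
  induction l with
  | zero =>
    intro i c hi
    interval_cases i
    simp
  | succ l ih =>
    intro i c hi
    rw [show l + 1 + 1 = l + 2 from rfl,
      alt_sum_succ l (fun j => ∏ t ∈ range i, (c + j + t + 1))]
    match i with
    | 0 =>
      simp
    | (i'+1) =>
      have hstep : ∀ j ∈ range (l+1),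
          (-1:ℝ)^j * (l.choose j) *
            ((∏ t ∈ range (i'+1), (c + ((j+1 : ℕ) : ℝ) + t + 1))
              - ∏ t ∈ range (i'+1), (c + j + t + 1))
          = (i'+1) * ((-1:ℝ)^j * (l.choose j) * ∏ t ∈ range i', ((c+1) + j + t + 1)) := by
        intro j _
        have := prod_diff i' c (j : ℝ)
        push_cast
        push_cast at this
        rw [this]
        ring
      rw [Finset.sum_congr rfl hstep, ← Finset.mul_sum, ih i' (c+1) (Nat.lt_succ_iff.mp hi)]
      rcases eq_or_ne i' l with rfl | hne
      · simp [pow_succ, Nat.factorial_succ]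
        push_cast
        ring
      · simp [hne, fun h => hne (Nat.succ_injective h)]

lemma fact_ratio (a i : ℕ) : ((a + i)! : ℝ) = (a !) * ∏ t ∈ range i, ((a:ℝ) + t + 1) := by
  induction i with
  | zero => simp
  | succ i ih =>
    rw [Finset.prod_range_succ, show a + (i+1) = (a+i) + 1 from rfl, Nat.factorial_succ]
    push_cast
    rw [ih]
    ring

lemma comb (ℓ k l : ℕ) (hkl : k ≤ l) :
    ∑ i ∈ range (k+1), ∑ j ∈ range (l+1),
      ((-1:ℝ)^i * ((k+ℓ).choose (k-i)) / i !) * ((-1:ℝ)^j * ((l+ℓ).choose (l-j)) / j !)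
        * ((ℓ+i+j)! : ℝ)
      = if k = l then ((k+ℓ)! : ℝ) / (k ! : ℝ) else 0 := by
  have inner : ∀ i ∈ range (k+1),
      ∑ j ∈ range (l+1), ((-1:ℝ)^i * ((k+ℓ).choose (k-i)) / i !)
          * ((-1:ℝ)^j * ((l+ℓ).choose (l-j)) / j !) * ((ℓ+i+j)! : ℝ)
      = ((-1:ℝ)^i * ((k+ℓ).choose (k-i)) / i !) * (((l+ℓ)! : ℝ) / (l ! : ℝ))
          * (if i = l then (-1:ℝ)^l * (l ! : ℝ) else 0) := by
    intro i hi
    rw [Finset.mem_range] at hi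
    have hik : i ≤ k := Nat.lt_succ_iff.mp hi
    have termeq : ∀ j ∈ range (l+1),
        ((-1:ℝ)^i * ((k+ℓ).choose (k-i)) / i !) * ((-1:ℝ)^j * ((l+ℓ).choose (l-j)) / j !)
            * ((ℓ+i+j)! : ℝ)
        = ((-1:ℝ)^i * ((k+ℓ).choose (k-i)) / i !) * (((l+ℓ)! : ℝ) / (l ! : ℝ))
            * ((-1:ℝ)^j * (l.choose j) * ∏ t ∈ range i, ((ℓ:ℝ) + j + t + 1)) := by
      intro j hj
      rw [Finset.mem_range] at hj
      have hjl : j ≤ l := Nat.lt_succ_iff.mp hj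
      have hfact : ((ℓ+i+j)! : ℝ) = ((ℓ+j)! : ℝ) * ∏ t ∈ range i, ((ℓ:ℝ) + j + t + 1) := by
        have h1 := fact_ratio (ℓ+j) i
        rw [show ℓ + j + i = ℓ + i + j by omega] at h1
        rw [h1]
        congr 1
        refine Finset.prod_congr rfl fun t _ => by push_cast; ring
      have hA : (((l+ℓ).choose (l-j) : ℕ) : ℝ) * (((l-j)! : ℕ) : ℝ) * (((ℓ+j)! : ℕ) : ℝ)
          = (((l+ℓ)! : ℕ) : ℝ) := by
        have h := Nat.choose_mul_factorial_mul_factorial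
          (show l - j ≤ l + ℓ by omega)
        rw [show l + ℓ - (l - j) = ℓ + j by omega] at h
        exact_mod_cast congrArg (Nat.cast : ℕ → ℝ) h
      have hB : ((l.choose j : ℕ) : ℝ) * ((j ! : ℕ) : ℝ) * (((l-j)! : ℕ) : ℝ)
          = ((l ! : ℕ) : ℝ) :=
        mod_cast congrArg (Nat.cast : ℕ → ℝ) (Nat.choose_mul_factorial_mul_factorial hjl)
      have hj0 : ((j ! : ℕ) : ℝ) ≠ 0 := by positivity
      have hl0 : ((l ! : ℕ) : ℝ) ≠ 0 := by positivity
      have hC : (((l+ℓ).choose (l-j) : ℕ) : ℝ) * (((ℓ+j)! : ℕ) : ℝ) / ((j ! : ℕ) : ℝ)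
          = (((l+ℓ)! : ℕ) : ℝ) / ((l ! : ℕ) : ℝ) * ((l.choose j : ℕ) : ℝ) := by
        field_simp
        linear_combination ((l.choose j : ℝ) * ((j ! : ℕ) : ℝ)) * hA
          - (((l+ℓ).choose (l-j) : ℝ) * (((ℓ+j)! : ℕ) : ℝ)) * hB
      rw [hfact]
      calc ((-1:ℝ)^i * ((k+ℓ).choose (k-i)) / i !) * ((-1:ℝ)^j * ((l+ℓ).choose (l-j)) / j !)
            * (((ℓ+j)! : ℝ) * ∏ t ∈ range i, ((ℓ:ℝ) + j + t + 1))
          = (((-1:ℝ)^i * ((k+ℓ).choose (k-i)) / i !) * (-1:ℝ)^j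
              * ∏ t ∈ range i, ((ℓ:ℝ) + j + t + 1))
            * (((l+ℓ).choose (l-j) : ℝ) * ((ℓ+j)! : ℝ) / (j ! : ℝ)) := by ring
        _ = _ := by rw [hC]; ring
    rw [Finset.sum_congr rfl termeq, ← Finset.mul_sum, key_sum l i (ℓ:ℝ) (le_trans hik hkl)]
  rw [Finset.sum_congr rfl inner]
  rcases eq_or_ne k l with rfl | hne
  · rw [Finset.sum_eq_single k]
    · simp [Nat.sub_self]
      field_simp
      have hs : (-1:ℝ)^k * (-1:ℝ)^k = 1 := by
        rw [← pow_add, ← two_mul, pow_mul, neg_one_sq, one_pow]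
      linear_combination hs
    · intro i hi hik
      simp [hik]
    · intro h; exact absurd (Finset.self_mem_range_succ k) h
  · have : ∀ i ∈ range (k+1), ((-1:ℝ)^i * ((k+ℓ).choose (k-i)) / i !)
        * (((l+ℓ)! : ℝ) / (l ! : ℝ)) * (if i = l then (-1:ℝ)^l * (l ! : ℝ) else 0) = 0 := by
      intro i hi
      rw [Finset.mem_range] at hi
      have : i ≠ l := by omega
      simp [this]
    rw [Finset.sum_congr rfl this]
    simp [hne]

lemma genLaguerre_orthogonality_aux (ℓ k l : ℕ) (hkl : k ≤ l) :
    ∫ r in Set.Ioi (0 : ℝ),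
        r ^ ℓ * Real.exp (-r) * genLaguerre ℓ k r * genLaguerre ℓ l r
      = if k = l then ((k + ℓ)! : ℝ) / (k ! : ℝ) else 0 := by
  have hfun : Set.EqOn
      (fun r : ℝ => r ^ ℓ * Real.exp (-r) * genLaguerre ℓ k r * genLaguerre ℓ l r)
      (fun r : ℝ => ∑ i ∈ range (k+1), ∑ j ∈ range (l+1),
        (((-1:ℝ)^i * ((k+ℓ).choose (k-i)) / i !) * ((-1:ℝ)^j * ((l+ℓ).choose (l-j)) / j !))
          * (r ^ (ℓ+i+j) * Real.exp (-r))) (Set.Ioi 0) := by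
    intro r hr
    have hr' : (0:ℝ) < r := hr
    simp only
    rw [genLaguerre_eq ℓ k hr', genLaguerre_eq ℓ l hr']
    simp only [Finset.mul_sum, Finset.sum_mul]
    rw [Finset.sum_comm]
    refine Finset.sum_congr rfl fun i _ => Finset.sum_congr rfl fun j _ => ?_
    rw [pow_add, pow_add]
    ring
  rw [setIntegral_congr_fun measurableSet_Ioi hfun]
  rw [integral_finset_sum _ (fun i _ => integrable_finset_sum _
    (fun j _ => ((integrable_pow_mul_exp (ℓ+i+j)).const_mul _)))]
  have hswap : ∀ i ∈ range (k+1),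
      (∫ r in Set.Ioi (0:ℝ), ∑ j ∈ range (l+1),
        (((-1:ℝ)^i * ((k+ℓ).choose (k-i)) / i !) * ((-1:ℝ)^j * ((l+ℓ).choose (l-j)) / j !))
          * (r ^ (ℓ+i+j) * Real.exp (-r)))
      = ∑ j ∈ range (l+1),
        (((-1:ℝ)^i * ((k+ℓ).choose (k-i)) / i !) * ((-1:ℝ)^j * ((l+ℓ).choose (l-j)) / j !))
          * ((ℓ+i+j)! : ℝ) := by
    intro i _
    rw [integral_finset_sum _ (fun j _ => ((integrable_pow_mul_exp (ℓ+i+j)).const_mul _))]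
    refine Finset.sum_congr rfl fun j _ => ?_
    rw [MeasureTheory.integral_const_mul, integral_pow_mul_exp]
  rw [Finset.sum_congr rfl hswap]
  exact comb ℓ k l hkl

end aux

/-- Orthogonality of the generalized Laguerre polynomials:
`∫_0^∞ r^ℓ e^{−r} L_k^{(ℓ)}(r) L_l^{(ℓ)}(r) dr = ((k+ℓ)!/k!) δ_{k,l}`. -/
theorem genLaguerre_orthogonality (ℓ k l : ℕ) :
    ∫ r in Set.Ioi (0 : ℝ),
        r ^ ℓ * Real.exp (-r) * genLaguerre ℓ k r * genLaguerre ℓ l r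
      = if k = l then ((k + ℓ)! : ℝ) / (k ! : ℝ) else 0 := by
  rcases le_total k l with h | h
  · exact genLaguerre_orthogonality_aux ℓ k l h
  · have hcomm : (fun r : ℝ => r ^ ℓ * Real.exp (-r) * genLaguerre ℓ k r * genLaguerre ℓ l r)
        = (fun r : ℝ => r ^ ℓ * Real.exp (-r) * genLaguerre ℓ l r * genLaguerre ℓ k r) :=
      funext fun r => by ring
    calc ∫ r in Set.Ioi (0 : ℝ),
          r ^ ℓ * Real.exp (-r) * genLaguerre ℓ k r * genLaguerre ℓ l r
        = ∫ r in Set.Ioi (0 : ℝ),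
          r ^ ℓ * Real.exp (-r) * genLaguerre ℓ l r * genLaguerre ℓ k r := by rw [hcomm]
      _ = if l = k then ((l + ℓ)! : ℝ) / (l ! : ℝ) else 0 :=
          genLaguerre_orthogonality_aux ℓ l k h
      _ = if k = l then ((k + ℓ)! : ℝ) / (k ! : ℝ) else 0 := by
          rcases eq_or_ne k l with rfl | hne
          · simp
          · simp [hne, Ne.symm hne]
end

section
/- For real numbers u_1,…,u_m, v_1,…,v_n with m ≤ n and all u_i ≠ v_j, the generalized Cauchy determinant identity holds: ∏_{i<j}(u_j−u_i) · ∏_{i<j}(v_j−v_i) / ∏_{i,j}(u_i − v_j) = (−1)^{m(2n−m−1)/2} · det C, where C is the n×n matrix whose first m rows have entries C_{i,j} = 1/(u_i − v_j) and whose last n−m rows have entries C_{m+k,j} = v_j^{k−1} for k = 1,…,n−m. -/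
open Finset

open Polynomial Matrix


private lemma CsubX_eq (a : ℝ) : (C a - X : ℝ[X]) = -(X - C a) := by ring

private lemma natDegree_CsubX (a : ℝ) : (C a - X : ℝ[X]).natDegree = 1 := by
  rw [CsubX_eq, natDegree_neg, natDegree_X_sub_C]

private lemma CsubX_ne_zero (a : ℝ) : (C a - X : ℝ[X]) ≠ 0 := by
  intro h
  have := natDegree_CsubX a
  rw [h] at this
  simp at this

private lemma leadingCoeff_CsubX (a : ℝ) : (C a - X : ℝ[X]).leadingCoeff = -1 := by
  rw [CsubX_eq, leadingCoeff_neg, (monic_X_sub_C a).leadingCoeff]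

private lemma natDegree_P {m : ℕ} (u : Fin m → ℝ) :
    (∏ i : Fin m, (C (u i) - X) : ℝ[X]).natDegree = m := by
  rw [natDegree_prod _ _ (fun i _ => CsubX_ne_zero (u i))]
  simp [natDegree_CsubX]

private lemma coeff_P_top {m : ℕ} (u : Fin m → ℝ) :
    (∏ i : Fin m, (C (u i) - X) : ℝ[X]).coeff m = (-1) ^ m := by
  set p : ℝ[X] := ∏ i : Fin m, (C (u i) - X) with hp
  have h : p.natDegree = m := natDegree_P u
  conv_lhs => rw [← h]
  rw [coeff_natDegree, hp, leadingCoeff_prod]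
  simp [leadingCoeff_CsubX]

private lemma natDegree_erase_lt {m : ℕ} (u : Fin m → ℝ) (i : Fin m) :
    (∏ i' ∈ univ.erase i, (C (u i') - X) : ℝ[X]).natDegree < m := by
  refine lt_of_le_of_lt (natDegree_prod_le _ _) ?_
  have h : ∑ i' ∈ univ.erase i, (C (u i') - X : ℝ[X]).natDegree = m - 1 := by
    simp [natDegree_CsubX, Finset.card_erase_of_mem]
  rw [h]
  have : 0 < m := i.pos
  omega

private lemma exponent_eq (m n : ℕ) (hmn : m ≤ n) :
    m * (2 * n - m - 1) / 2 = m * (m - 1) / 2 + m * (n - m) := by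
  rcases Nat.eq_zero_or_pos m with hm | hm
  · subst hm; simp
  · have h1 : 2 * n - m - 1 = (m - 1) + 2 * (n - m) := by omega
    have h2 : m * ((m - 1) + 2 * (n - m)) = m * (m - 1) + 2 * (m * (n - m)) := by ring
    rw [h1, h2]
    have h3 : Even ((m - 1) * ((m - 1) + 1)) := Nat.even_mul_succ_self (m - 1)
    have h4 : (m - 1) + 1 = m := by omega
    rw [h4] at h3
    have h5 : (m - 1) * m = m * (m - 1) := by ring
    rw [h5] at h3
    obtain ⟨k, hk⟩ := h3
    set a := m * (m - 1)
    set b := m * (n - m)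
    omega

private lemma centaur_core (m n : ℕ) (hmn : m ≤ n)
    (u : Fin m → ℝ) (v : Fin n → ℝ) (huv : ∀ i j, u i ≠ v j)
    (hu : Function.Injective u) (hv : Function.Injective v) :
    (∏ i : Fin m, ∏ j ∈ Finset.Ioi i, (u j - u i))
        * (∏ i : Fin n, ∏ j ∈ Finset.Ioi i, (v j - v i))
        / ∏ i : Fin m, ∏ j : Fin n, (u i - v j)
      = (-1) ^ (m * (2 * n - m - 1) / 2)
        * Matrix.det (Matrix.of fun i j : Fin n =>
            if h : (i : ℕ) < m then (u ⟨i, h⟩ - v j)⁻¹ else v j ^ ((i : ℕ) - m)) := by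
  set P : ℝ[X] := ∏ i : Fin m, (C (u i) - X) with hP
  set Cm : Matrix (Fin n) (Fin n) ℝ := Matrix.of fun i j : Fin n =>
      if h : (i : ℕ) < m then (u ⟨i, h⟩ - v j)⁻¹ else v j ^ ((i : ℕ) - m) with hCm
  set q : Fin n → ℝ[X] := fun i =>
      if h : (i : ℕ) < m then ∏ i' ∈ univ.erase (⟨(i : ℕ), h⟩ : Fin m), (C (u i') - X)
      else X ^ ((i : ℕ) - m) * P with hq
  set A : Matrix (Fin n) (Fin n) ℝ := Matrix.of fun i k : Fin n => (q i).coeff (k : ℕ) with hA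
  -- abbreviations
  set Δu : ℝ := ∏ i : Fin m, ∏ j ∈ Finset.Ioi i, (u j - u i) with hΔu
  set Δv : ℝ := ∏ i : Fin n, ∏ j ∈ Finset.Ioi i, (v j - v i) with hΔv
  set Pv : ℝ := ∏ j : Fin n, ∏ i' : Fin m, (u i' - v j) with hPv
  have hPv_ne : Pv ≠ 0 := by
    rw [hPv]
    exact prod_ne_zero_iff.mpr fun j _ =>
      prod_ne_zero_iff.mpr fun i _ => sub_ne_zero.mpr (huv i j)
  have hΔu_ne : Δu ≠ 0 := by
    rw [hΔu, ← det_vandermonde u]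
    exact det_vandermonde_ne_zero_iff.mpr hu
  -- degrees
  have hqdeg : ∀ i : Fin n, (q i).natDegree < n := by
    intro i
    simp only [hq]
    by_cases h : (i : ℕ) < m
    · rw [dif_pos h]
      exact lt_of_lt_of_le (natDegree_erase_lt u _) hmn
    · rw [dif_neg h]
      refine lt_of_le_of_lt (natDegree_mul_le) ?_
      have h1 : (X : ℝ[X]).natDegree = 1 := natDegree_X
      have h2 : (X ^ ((i : ℕ) - m) : ℝ[X]).natDegree ≤ (i : ℕ) - m := by
        simpa using natDegree_pow_le (p := (X : ℝ[X])) (n := (i : ℕ) - m)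
      have h3 : P.natDegree = m := natDegree_P u
      have := i.isLt
      omega
  -- evaluation
  have heval : ∀ (i : Fin n) (j : Fin n),
      (q i).eval (v j) = (∏ i' : Fin m, (u i' - v j)) * Cm i j := by
    intro i j
    simp only [hq, hCm]
    by_cases h : (i : ℕ) < m
    · rw [dif_pos h]
      simp only [Matrix.of_apply, dif_pos h]
      have hne : u ⟨(i : ℕ), h⟩ - v j ≠ 0 := sub_ne_zero.mpr (huv _ _)
      rw [← Finset.mul_prod_erase univ (fun i' => u i' - v j)
        (mem_univ (⟨(i : ℕ), h⟩ : Fin m))]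
      rw [eval_prod]
      simp only [eval_sub, eval_C, eval_X]
      field_simp
    · rw [dif_neg h]
      simp only [Matrix.of_apply, dif_neg h]
      rw [eval_mul, eval_pow, eval_X, hP, eval_prod]
      simp only [eval_sub, eval_C, eval_X]
      ring
  -- M = A * Vᵀ
  have hMAV : (Matrix.of fun i j : Fin n => (∏ i' : Fin m, (u i' - v j)) * Cm i j)
      = A * (vandermonde v)ᵀ := by
    ext i j
    rw [Matrix.mul_apply]
    simp only [Matrix.of_apply, hA, transpose_apply, vandermonde_apply]
    rw [← heval i j, eval_eq_sum_range' (hqdeg i), ← Fin.sum_univ_eq_sum_range]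
  have hdet1 : Pv * Cm.det = A.det * Δv := by
    calc Pv * Cm.det
        = (Matrix.of fun i j : Fin n => (∏ i' : Fin m, (u i' - v j)) * Cm i j).det := by
          rw [det_mul_row (fun j => ∏ i' : Fin m, (u i' - v j)) Cm, hPv]
      _ = (A * (vandermonde v)ᵀ).det := by rw [hMAV]
      _ = A.det * Δv := by rw [det_mul, det_transpose, det_vandermonde, hΔv]
  -- block decomposition
  set e : Fin m ⊕ Fin (n - m) ≃ Fin n :=
    finSumFinEquiv.trans (finCongr (Nat.add_sub_cancel' hmn)) with he
  have he1 : ∀ i : Fin m, ((e (Sum.inl i)) : ℕ) = (i : ℕ) := by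
    intro i; simp [he]
  have he2 : ∀ k : Fin (n - m), ((e (Sum.inr k)) : ℕ) = m + (k : ℕ) := by
    intro k; simp [he]
  set B : Matrix (Fin m) (Fin m) ℝ :=
    Matrix.of fun i k : Fin m =>
      (∏ i' ∈ univ.erase i, (C (u i') - X) : ℝ[X]).coeff (k : ℕ) with hB
  set D : Matrix (Fin (n - m)) (Fin (n - m)) ℝ :=
    Matrix.of fun k l : Fin (n - m) => (X ^ (k : ℕ) * P).coeff (m + (l : ℕ)) with hD
  set C' : Matrix (Fin (n - m)) (Fin m) ℝ :=
    Matrix.of fun k i => (q (e (Sum.inr k))).coeff ((e (Sum.inl i)) : ℕ) with hC'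
  have hblock : A.submatrix e e = fromBlocks B 0 C' D := by
    ext i j
    cases i with
    | inl i =>
      have h1 : ((e (Sum.inl i)) : ℕ) < m := by rw [he1]; exact i.isLt
      have hfin : (⟨((e (Sum.inl i)) : ℕ), h1⟩ : Fin m) = i := Fin.ext (he1 i)
      cases j with
      | inl k =>
        simp only [submatrix_apply, fromBlocks_apply₁₁, hA, hB, Matrix.of_apply, hq,
          dif_pos h1, hfin, he1]
        simp
      | inr l =>
        simp only [submatrix_apply, fromBlocks_apply₁₂, hA, Matrix.of_apply, hq,
          dif_pos h1, Matrix.zero_apply]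
        apply coeff_eq_zero_of_natDegree_lt
        have hd := natDegree_erase_lt u (⟨((e (Sum.inl i)) : ℕ), h1⟩ : Fin m)
        have h2 := he2 l
        omega
    | inr k =>
      cases j with
      | inl i =>
        simp only [submatrix_apply, fromBlocks_apply₂₁, hA, hC', Matrix.of_apply]
      | inr l =>
        have h2 : ¬ ((e (Sum.inr k)) : ℕ) < m := by rw [he2]; omega
        simp only [submatrix_apply, fromBlocks_apply₂₂, hA, hD, Matrix.of_apply, hq,
          dif_neg h2]
        have h3 : ((e (Sum.inr k)) : ℕ) - m = (k : ℕ) := by rw [he2]; omega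
        rw [h3, he2 l]
  have hdetA : A.det = B.det * D.det := by
    rw [← det_submatrix_equiv_self e A, hblock, det_fromBlocks_zero₁₂]
  -- determinant of D
  have hdetD : D.det = (-1 : ℝ) ^ (m * (n - m)) := by
    have htri : D.BlockTriangular OrderDual.toDual := by
      intro a b hab
      have hab' : (a : ℕ) < (b : ℕ) := hab
      simp only [hD, Matrix.of_apply]
      rw [mul_comm (X ^ (a : ℕ) : ℝ[X]) P, coeff_mul_X_pow']
      rw [if_pos (by omega : (a : ℕ) ≤ m + (b : ℕ))]
      apply coeff_eq_zero_of_natDegree_lt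
      rw [hP, natDegree_P u]
      omega
    rw [det_of_lowerTriangular D htri]
    have hdiag : ∀ k : Fin (n - m), D k k = (-1 : ℝ) ^ m := by
      intro k
      simp only [hD, Matrix.of_apply]
      rw [mul_comm (X ^ (k : ℕ) : ℝ[X]) P, coeff_mul_X_pow',
        if_pos (by omega : (k : ℕ) ≤ m + (k : ℕ))]
      have h4 : m + (k : ℕ) - (k : ℕ) = m := by omega
      rw [h4, hP, coeff_P_top u]
    rw [prod_congr rfl (fun k _ => hdiag k), prod_const, card_univ, Fintype.card_fin,
      ← pow_mul]
  -- determinant of B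
  have hBVu : B * (vandermonde u)ᵀ
      = diagonal (fun i : Fin m => ∏ i' ∈ univ.erase i, (u i' - u i)) := by
    ext i j
    rw [Matrix.mul_apply]
    simp only [hB, Matrix.of_apply, transpose_apply, vandermonde_apply]
    have hsum : (∑ k : Fin m,
        (∏ i' ∈ univ.erase i, (C (u i') - X) : ℝ[X]).coeff (k : ℕ) * u j ^ (k : ℕ))
        = eval (u j) (∏ i' ∈ univ.erase i, (C (u i') - X) : ℝ[X]) := by
      rw [eval_eq_sum_range' (natDegree_erase_lt u i), ← Fin.sum_univ_eq_sum_range]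
    rw [hsum, eval_prod]
    simp only [eval_sub, eval_C, eval_X]
    by_cases hij : i = j
    · subst hij
      rw [diagonal_apply_eq]
    · rw [diagonal_apply_ne _ hij]
      exact prod_eq_zero (Finset.mem_erase.mpr ⟨fun hc => hij hc.symm, mem_univ j⟩)
        (sub_self (u j))
  have hdiagprod : (∏ i : Fin m, ∏ i' ∈ univ.erase i, (u i' - u i))
      = (-1 : ℝ) ^ (m * (m - 1) / 2) * (Δu * Δu) := by
    have herase : ∀ i : Fin m, univ.erase i = ({i}ᶜ : Finset (Fin m)) := by
      intro i
      rw [Finset.compl_eq_univ_sdiff, Finset.erase_eq]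
    have hsum2 : (∑ i : Fin m, #(Ioi i)) = m * (m - 1) / 2 := by
      simp only [Fin.card_Ioi]
      rw [Fin.sum_univ_eq_sum_range (fun i => m - 1 - i) m,
        sum_range_reflect (fun i => i) m, sum_range_id]
    have h0 := prod_prod_Ioi_mul_eq_prod_prod_off_diag (fun a b : Fin m => u a - u b)
    simp only [Finset.compl_eq_univ_sdiff, ← Finset.erase_eq] at h0
    calc (∏ i : Fin m, ∏ i' ∈ univ.erase i, (u i' - u i))
        = ∏ i : Fin m, ∏ j ∈ Ioi i, ((u j - u i) * (u i - u j)) := by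
          have hinst : (fun a b => LinearOrder.toDecidableEq a b : DecidableEq (Fin m))
              = instDecidableEqFin m := Subsingleton.elim _ _
          rw [hinst] at h0
          exact h0.symm
      _ = ∏ i : Fin m, ∏ j ∈ Ioi i, ((-1 : ℝ) * ((u j - u i) * (u j - u i))) :=
          prod_congr rfl fun i _ => prod_congr rfl fun j _ => by ring
      _ = ∏ i : Fin m, (((-1 : ℝ) ^ #(Ioi i)) * ((∏ j ∈ Ioi i, (u j - u i)) *
            (∏ j ∈ Ioi i, (u j - u i)))) :=
          prod_congr rfl fun i _ => by rw [prod_mul_distrib, prod_mul_distrib, prod_const]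
      _ = (∏ i : Fin m, (-1 : ℝ) ^ #(Ioi i)) * (Δu * Δu) := by
          rw [prod_mul_distrib, prod_mul_distrib, hΔu]
      _ = (-1 : ℝ) ^ (m * (m - 1) / 2) * (Δu * Δu) := by
          rw [prod_pow_eq_pow_sum, hsum2]
  have hdetB : B.det = (-1 : ℝ) ^ (m * (m - 1) / 2) * Δu := by
    have h6 : B.det * Δu = ((-1 : ℝ) ^ (m * (m - 1) / 2) * Δu) * Δu := by
      calc B.det * Δu = B.det * (vandermonde u)ᵀ.det := by
            rw [det_transpose, det_vandermonde, hΔu]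
        _ = (B * (vandermonde u)ᵀ).det := (det_mul _ _).symm
        _ = ∏ i : Fin m, ∏ i' ∈ univ.erase i, (u i' - u i) := by
            rw [hBVu, det_diagonal]
        _ = ((-1 : ℝ) ^ (m * (m - 1) / 2) * Δu) * Δu := by rw [hdiagprod, mul_assoc]
    exact mul_right_cancel₀ hΔu_ne h6
  -- assembly
  have hCmdet : Cm.det = ((-1 : ℝ) ^ (m * (m - 1) / 2 + m * (n - m))) * (Δu * Δv / Pv) := by
    have : Cm.det = A.det * Δv / Pv := by
      field_simp
      linarith [hdet1]
    rw [this, hdetA, hdetB, hdetD, pow_add]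
    ring
  have hEq : m * (2 * n - m - 1) / 2 = m * (m - 1) / 2 + m * (n - m) := exponent_eq m n hmn
  have hcomm : (∏ i : Fin m, ∏ j : Fin n, (u i - v j)) = Pv := by
    rw [hPv]; exact Finset.prod_comm
  rw [hcomm, hCmdet, hEq, ← mul_assoc, ← pow_add]
  have heven : (-1 : ℝ) ^ ((m * (m - 1) / 2 + m * (n - m)) + (m * (m - 1) / 2 + m * (n - m)))
      = 1 := Even.neg_one_pow ⟨_, rfl⟩
  rw [heven, one_mul]

private lemma vandermonde_prod_zero {n : ℕ} (v : Fin n → ℝ) {a b : Fin n}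
    (hab : a < b) (hv : v b = v a) :
    (∏ i : Fin n, ∏ j ∈ Finset.Ioi i, (v j - v i)) = 0 :=
  Finset.prod_eq_zero (mem_univ a)
    (Finset.prod_eq_zero (Finset.mem_Ioi.mpr hab) (by rw [hv, sub_self]))

/-- Generalized Cauchy ("centaur") determinant identity: for `m ≤ n` and `u_i ≠ v_j`,
`Δ_m(u)·Δ_n(v)/∏_{i,j}(u_i − v_j) = (−1)^{m(2n−m−1)/2} det C`, where the first `m` rows
of `C` are Cauchy rows `1/(u_i − v_j)` and the remaining `n − m` rows are Vandermonde
rows `v_j^{k−1}`. -/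
theorem generalized_cauchy_determinant (m n : ℕ) (hmn : m ≤ n)
    (u : Fin m → ℝ) (v : Fin n → ℝ) (huv : ∀ i j, u i ≠ v j) :
    (∏ i : Fin m, ∏ j ∈ Finset.Ioi i, (u j - u i))
        * (∏ i : Fin n, ∏ j ∈ Finset.Ioi i, (v j - v i))
        / ∏ i : Fin m, ∏ j : Fin n, (u i - v j)
      = (-1) ^ (m * (2 * n - m - 1) / 2)
        * Matrix.det (Matrix.of fun i j : Fin n =>
            if h : (i : ℕ) < m then (u ⟨i, h⟩ - v j)⁻¹ else v j ^ ((i : ℕ) - m)) := by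
  by_cases hu : Function.Injective u
  · by_cases hv : Function.Injective v
    · exact centaur_core m n hmn u v huv hu hv
    · obtain ⟨a, b, hab, hne⟩ : ∃ a b, v a = v b ∧ a ≠ b := by
        simpa [Function.Injective, not_forall] using hv
      rcases lt_or_gt_of_ne hne with h | h
      · rw [vandermonde_prod_zero v h hab.symm]
        rw [Matrix.det_zero_of_column_eq hne (fun k => by
          by_cases hk : (k : ℕ) < m <;> simp [hk, hab])]
        simp
      · rw [vandermonde_prod_zero v h hab]
        rw [Matrix.det_zero_of_column_eq hne (fun k => by
          by_cases hk : (k : ℕ) < m <;> simp [hk, hab])]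
        simp
  · obtain ⟨a, b, hab, hne⟩ : ∃ a b, u a = u b ∧ a ≠ b := by
      simpa [Function.Injective, not_forall] using hu
    have hrow : ∀ (x y : Fin m), u x = u y →
        (Matrix.of fun i j : Fin n =>
            if h : (i : ℕ) < m then (u ⟨i, h⟩ - v j)⁻¹ else v j ^ ((i : ℕ) - m))
          (Fin.castLE hmn x)
        = (Matrix.of fun i j : Fin n =>
            if h : (i : ℕ) < m then (u ⟨i, h⟩ - v j)⁻¹ else v j ^ ((i : ℕ) - m))
          (Fin.castLE hmn y) := by
      intro x y hxy
      funext j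
      simp only [Matrix.of_apply, Fin.coe_castLE, dif_pos x.isLt, dif_pos y.isLt,
        Fin.eta, hxy]
    have hne' : Fin.castLE hmn a ≠ Fin.castLE hmn b := fun hc =>
      hne (Fin.castLE_injective hmn hc)
    rw [Matrix.det_zero_of_row_eq hne' (hrow a b hab)]
    rcases lt_or_gt_of_ne hne with h | h
    · rw [vandermonde_prod_zero u h hab.symm]
      simp
    · rw [vandermonde_prod_zero u h hab]
      simp
end

section
/- The solution of the endpoint-density normalization: the function δρ(x) = x / (π·√((b²−x²)(x²−a²))) on (a,b), with 0 < a < b, satisfies ∫_a^b δρ(x) dx = 1/2, and for every x ∈ (a,b), the principal value integral satisfies P.V. ∫_a^b [4x·δρ(y)/(x²−y²)] dy = 0. -/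
open Finset Real MeasureTheory Filter Topology Set

noncomputable def deltaRho (a b x : ℝ) : ℝ :=
  x / (Real.pi * Real.sqrt ((b ^ 2 - x ^ 2) * (x ^ 2 - a ^ 2)))

lemma deltaRho_hasDerivAt (a b : ℝ) (ha : 0 < a) (hab : a < b) {x : ℝ} (hx : x ∈ Set.Ioo a b) :
    HasDerivAt (fun t => (1 / (2 * Real.pi)) * Real.arcsin ((2 * t ^ 2 - (a ^ 2 + b ^ 2)) / (b ^ 2 - a ^ 2)))
      (deltaRho a b x) x := by
  obtain ⟨hax, hxb⟩ := hx
  have hx0 : 0 < x := ha.trans hax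
  have hΔ : (0:ℝ) < b ^ 2 - a ^ 2 := by nlinarith
  have h1 : (0:ℝ) < b ^ 2 - x ^ 2 := by nlinarith
  have h2 : (0:ℝ) < x ^ 2 - a ^ 2 := by nlinarith
  set z : ℝ := (2 * x ^ 2 - (a ^ 2 + b ^ 2)) / (b ^ 2 - a ^ 2) with hz
  have hz1 : z ≠ -1 := by
    intro h; rw [hz, div_eq_iff hΔ.ne'] at h; nlinarith
  have hz2 : z ≠ 1 := by
    intro h; rw [hz, div_eq_iff hΔ.ne'] at h; nlinarith
  have hinner : HasDerivAt (fun t : ℝ => (2 * t ^ 2 - (a ^ 2 + b ^ 2)) / (b ^ 2 - a ^ 2))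
      (4 * x / (b ^ 2 - a ^ 2)) x := by
    have : HasDerivAt (fun t : ℝ => 2 * t ^ 2 - (a ^ 2 + b ^ 2)) (4 * x) x := by
      have h := ((hasDerivAt_pow 2 x).const_mul 2).sub_const (a ^ 2 + b ^ 2)
      refine h.congr_deriv ?_
      ring
    simpa [div_eq_mul_inv] using this.div_const (b ^ 2 - a ^ 2)
  have harcsin := (Real.hasDerivAt_arcsin hz1 hz2).comp x hinner
  have hd := harcsin.const_mul (1 / (2 * Real.pi))
  refine hd.congr_deriv ?_
  have hP : (0:ℝ) ≤ (b ^ 2 - x ^ 2) * (x ^ 2 - a ^ 2) := le_of_lt (mul_pos h1 h2)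
  have hsq : Real.sqrt (1 - z ^ 2) = 2 * Real.sqrt ((b ^ 2 - x ^ 2) * (x ^ 2 - a ^ 2)) / (b ^ 2 - a ^ 2) := by
    rw [show (1 : ℝ) - z ^ 2 = (2 * Real.sqrt ((b ^ 2 - x ^ 2) * (x ^ 2 - a ^ 2)) / (b ^ 2 - a ^ 2)) ^ 2 by
      have e : (2 * Real.sqrt ((b ^ 2 - x ^ 2) * (x ^ 2 - a ^ 2)) / (b ^ 2 - a ^ 2)) ^ 2
          = 4 * ((b ^ 2 - x ^ 2) * (x ^ 2 - a ^ 2)) / (b ^ 2 - a ^ 2) ^ 2 := by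
        rw [div_pow, mul_pow, Real.sq_sqrt hP]; norm_num
      rw [e, hz]
      field_simp
      ring]
    exact Real.sqrt_sq (by positivity)
  have hsqpos : (0:ℝ) < Real.sqrt ((b ^ 2 - x ^ 2) * (x ^ 2 - a ^ 2)) := Real.sqrt_pos.2 (mul_pos h1 h2)
  rw [deltaRho, hsq]
  have hπ := Real.pi_pos
  field_simp
  ring

theorem part1 (a b : ℝ) (ha : 0 < a) (hab : a < b) :
    (∫ x in Set.Ioo a b, deltaRho a b x) = 1 / 2 := by
  have hπ := Real.pi_pos
  set F : ℝ → ℝ := fun t => (1 / (2 * Real.pi)) * Real.arcsin ((2 * t ^ 2 - (a ^ 2 + b ^ 2)) / (b ^ 2 - a ^ 2)) with hF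
  have hcont : ContinuousOn F (Set.Icc a b) := by
    apply Continuous.continuousOn
    exact continuous_const.mul (Real.continuous_arcsin.comp (by continuity))
  have hderiv : ∀ x ∈ Set.Ioo a b, HasDerivAt F (deltaRho a b x) x :=
    fun x hx => deltaRho_hasDerivAt a b ha hab hx
  have hnonneg : ∀ x ∈ Set.Ioo a b, 0 ≤ deltaRho a b x := by
    intro x hx
    have : 0 < x := ha.trans hx.1
    unfold deltaRho
    positivity
  have hint : IntegrableOn (deltaRho a b) (Set.Ioc a b) :=
    intervalIntegral.integrableOn_deriv_of_nonneg hcont hderiv hnonneg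
  have hΔ : (0:ℝ) < b ^ 2 - a ^ 2 := by nlinarith
  have hii : IntervalIntegrable (deltaRho a b) volume a b :=
    (intervalIntegrable_iff_integrableOn_Ioc_of_le hab.le).2 hint
  have := intervalIntegral.integral_eq_sub_of_hasDerivAt_of_le hab.le hcont hderiv hii
  rw [intervalIntegral.integral_of_le hab.le, MeasureTheory.integral_Ioc_eq_integral_Ioo] at this
  rw [this, hF]
  have hbz : (2 * b ^ 2 - (a ^ 2 + b ^ 2)) / (b ^ 2 - a ^ 2) = 1 := by
    rw [div_eq_one_iff_eq hΔ.ne']; ring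
  have haz : (2 * a ^ 2 - (a ^ 2 + b ^ 2)) / (b ^ 2 - a ^ 2) = -1 := by
    rw [div_eq_iff hΔ.ne']; ring
  simp only [hbz, haz, Real.arcsin_one, Real.arcsin_neg_one]
  field_simp
  ring

/-- Antiderivative of `y ↦ 4x δρ(y)/(x²−y²)` on `(a,b) \ {x}`. -/
noncomputable def pvH (a b x y : ℝ) : ℝ :=
  2 * x / (Real.pi * (Real.sqrt (x ^ 2 - a ^ 2) * Real.sqrt (b ^ 2 - x ^ 2))) *
    (2 * Real.log (Real.sqrt (x ^ 2 - a ^ 2) * Real.sqrt (b ^ 2 - y ^ 2)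
        + Real.sqrt (b ^ 2 - x ^ 2) * Real.sqrt (y ^ 2 - a ^ 2))
      - Real.log (x ^ 2 - y ^ 2))

lemma pvH_hasDerivAt (a b x : ℝ) (ha : 0 < a) (hab : a < b) (hx : x ∈ Set.Ioo a b)
    {y : ℝ} (hy : y ∈ Set.Ioo a b) (hyx : y ≠ x) :
    HasDerivAt (pvH a b x) (4 * x * deltaRho a b y / (x ^ 2 - y ^ 2)) y := by
  obtain ⟨hax, hxb⟩ := hx
  obtain ⟨hay, hyb⟩ := hy
  have hx0 : 0 < x := ha.trans hax
  have hy0 : 0 < y := ha.trans hay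
  have hπ := Real.pi_pos
  set sp := Real.sqrt (x ^ 2 - a ^ 2) with hsp
  set sq' := Real.sqrt (b ^ 2 - x ^ 2) with hsq'
  set sr := Real.sqrt (b ^ 2 - y ^ 2) with hsr
  set ss := Real.sqrt (y ^ 2 - a ^ 2) with hss
  have hp2 : (0:ℝ) < x ^ 2 - a ^ 2 := by nlinarith
  have hq2 : (0:ℝ) < b ^ 2 - x ^ 2 := by nlinarith
  have hr2 : (0:ℝ) < b ^ 2 - y ^ 2 := by nlinarith
  have hs2 : (0:ℝ) < y ^ 2 - a ^ 2 := by nlinarith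
  have hsp0 : 0 < sp := Real.sqrt_pos.2 hp2
  have hsq0 : 0 < sq' := Real.sqrt_pos.2 hq2
  have hsr0 : 0 < sr := Real.sqrt_pos.2 hr2
  have hss0 : 0 < ss := Real.sqrt_pos.2 hs2
  have esp : sp ^ 2 = x ^ 2 - a ^ 2 := Real.sq_sqrt hp2.le
  have esq : sq' ^ 2 = b ^ 2 - x ^ 2 := Real.sq_sqrt hq2.le
  have esr : sr ^ 2 = b ^ 2 - y ^ 2 := Real.sq_sqrt hr2.le
  have ess : ss ^ 2 = y ^ 2 - a ^ 2 := Real.sq_sqrt hs2.le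
  have hrel : sr ^ 2 - sq' ^ 2 = sp ^ 2 - ss ^ 2 := by rw [esp, esq, esr, ess]; ring
  have hxy2 : x ^ 2 - y ^ 2 ≠ 0 := by
    intro h
    have : x = y := by nlinarith
    exact hyx this.symm
  have hN0 : 0 < sp * sr + sq' * ss := by positivity
  -- derivative of sr(y) = sqrt (b^2 - y^2)
  have d1 : HasDerivAt (fun t : ℝ => b ^ 2 - t ^ 2) (-(2 * y)) y := by
    simpa using ((hasDerivAt_pow 2 y).const_sub (b ^ 2))
  have dsr : HasDerivAt (fun t : ℝ => Real.sqrt (b ^ 2 - t ^ 2)) (-(2 * y) / (2 * sr)) y :=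
    d1.sqrt hr2.ne'
  have d2 : HasDerivAt (fun t : ℝ => t ^ 2 - a ^ 2) (2 * y) y := by
    simpa using ((hasDerivAt_pow 2 y).sub_const (a ^ 2))
  have dss : HasDerivAt (fun t : ℝ => Real.sqrt (t ^ 2 - a ^ 2)) (2 * y / (2 * ss)) y :=
    d2.sqrt hs2.ne'
  have dN : HasDerivAt (fun t : ℝ => sp * Real.sqrt (b ^ 2 - t ^ 2) + sq' * Real.sqrt (t ^ 2 - a ^ 2))
      (sp * (-(2 * y) / (2 * sr)) + sq' * (2 * y / (2 * ss))) y :=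
    (dsr.const_mul sp).add (dss.const_mul sq')
  have dlogN : HasDerivAt (fun t : ℝ => Real.log (sp * Real.sqrt (b ^ 2 - t ^ 2) + sq' * Real.sqrt (t ^ 2 - a ^ 2)))
      ((sp * (-(2 * y) / (2 * sr)) + sq' * (2 * y / (2 * ss))) / (sp * sr + sq' * ss)) y :=
    dN.log hN0.ne'
  have d3 : HasDerivAt (fun t : ℝ => x ^ 2 - t ^ 2) (-(2 * y)) y := by
    simpa using ((hasDerivAt_pow 2 y).const_sub (x ^ 2))
  have dlogD : HasDerivAt (fun t : ℝ => Real.log (x ^ 2 - t ^ 2)) (-(2 * y) / (x ^ 2 - y ^ 2)) y :=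
    d3.log hxy2
  have dH := (((dlogN.const_mul 2).sub dlogD).const_mul (2 * x / (Real.pi * (sp * sq'))))
  have hval : 2 * x / (Real.pi * (sp * sq')) *
        (2 * ((sp * (-(2 * y) / (2 * sr)) + sq' * (2 * y / (2 * ss))) / (sp * sr + sq' * ss))
          - -(2 * y) / (x ^ 2 - y ^ 2))
      = 4 * x * deltaRho a b y / (x ^ 2 - y ^ 2) := by
    have key : (x ^ 2 - y ^ 2) * (sq' * sr - sp * ss)
        = (sp * sq' - sr * ss) * (sp * sr + sq' * ss) := by
      have hxy : x ^ 2 - y ^ 2 = sp ^ 2 - ss ^ 2 := by rw [esp, ess]; ring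
      rw [hxy]
      linear_combination (sp * ss) * hrel
    have e2 : (sq' * sr - sp * ss) / (sp * sr + sq' * ss)
        = (sp * sq' - sr * ss) / (x ^ 2 - y ^ 2) := by
      rw [div_eq_div_iff hN0.ne' hxy2]; linear_combination key
    have e1 : sp * (-(2 * y) / (2 * sr)) + sq' * (2 * y / (2 * ss))
        = y * ((sq' * sr - sp * ss) / (sr * ss)) := by field_simp; ring
    have e3 : y * ((sq' * sr - sp * ss) / (sr * ss)) / (sp * sr + sq' * ss)
        = y / (sr * ss) * ((sq' * sr - sp * ss) / (sp * sr + sq' * ss)) := by ring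
    rw [deltaRho, Real.sqrt_mul hr2.le, ← hsr, ← hss, e1, e3, e2]
    field_simp
    ring
  rw [← hval]
  exact dH

lemma pvH_continuousOn (a b x : ℝ) (ha : 0 < a) (hab : a < b) (hx : x ∈ Set.Ioo a b)
    {s : Set ℝ} (hs : s ⊆ Set.Icc a b) (hsx : ∀ y ∈ s, y ≠ x) :
    ContinuousOn (pvH a b x) s := by
  obtain ⟨hax, hxb⟩ := hx
  have hx0 : 0 < x := ha.trans hax
  have hsp0 : 0 < Real.sqrt (x ^ 2 - a ^ 2) := Real.sqrt_pos.2 (by nlinarith)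
  have hsq0 : 0 < Real.sqrt (b ^ 2 - x ^ 2) := Real.sqrt_pos.2 (by nlinarith)
  have hNc : Continuous (fun y : ℝ => Real.sqrt (x ^ 2 - a ^ 2) * Real.sqrt (b ^ 2 - y ^ 2)
      + Real.sqrt (b ^ 2 - x ^ 2) * Real.sqrt (y ^ 2 - a ^ 2)) := by fun_prop
  have hNpos : ∀ y ∈ s, (0:ℝ) < Real.sqrt (x ^ 2 - a ^ 2) * Real.sqrt (b ^ 2 - y ^ 2)
      + Real.sqrt (b ^ 2 - x ^ 2) * Real.sqrt (y ^ 2 - a ^ 2) := by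
    intro y hy
    obtain ⟨hay, hyb⟩ := hs hy
    have h0y : 0 < y := lt_of_lt_of_le ha hay
    rcases lt_or_eq_of_le hyb with h | h
    · have : 0 < Real.sqrt (b ^ 2 - y ^ 2) := Real.sqrt_pos.2 (by nlinarith)
      have : 0 < Real.sqrt (x ^ 2 - a ^ 2) * Real.sqrt (b ^ 2 - y ^ 2) := by positivity
      nlinarith [Real.sqrt_nonneg (b ^ 2 - x ^ 2), Real.sqrt_nonneg (y ^ 2 - a ^ 2)]
    · have : 0 < Real.sqrt (y ^ 2 - a ^ 2) := Real.sqrt_pos.2 (by nlinarith)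
      have : 0 < Real.sqrt (b ^ 2 - x ^ 2) * Real.sqrt (y ^ 2 - a ^ 2) := by positivity
      nlinarith [Real.sqrt_nonneg (x ^ 2 - a ^ 2), Real.sqrt_nonneg (b ^ 2 - y ^ 2)]
  have hD : ∀ y ∈ s, x ^ 2 - y ^ 2 ≠ 0 := by
    intro y hy h
    obtain ⟨hay, hyb⟩ := hs hy
    have h0y : 0 < y := lt_of_lt_of_le ha hay
    have : y = x := by nlinarith
    exact hsx y hy this
  have c1 : ContinuousOn (fun y : ℝ => Real.log (Real.sqrt (x ^ 2 - a ^ 2) * Real.sqrt (b ^ 2 - y ^ 2)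
      + Real.sqrt (b ^ 2 - x ^ 2) * Real.sqrt (y ^ 2 - a ^ 2))) s :=
    ContinuousOn.log hNc.continuousOn (fun y hy => (hNpos y hy).ne')
  have c2 : ContinuousOn (fun y : ℝ => Real.log (x ^ 2 - y ^ 2)) s :=
    ContinuousOn.log (by fun_prop) hD
  exact continuousOn_const.mul ((continuousOn_const.mul c1).sub c2)

lemma deltaRho_nonneg (a b : ℝ) (ha : 0 < a) {y : ℝ} (hy : y ∈ Set.Ioo a b) :
    0 ≤ deltaRho a b y := by
  have : 0 < y := ha.trans hy.1
  unfold deltaRho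
  positivity

lemma pv_left (a b x : ℝ) (ha : 0 < a) (hab : a < b) (hx : x ∈ Set.Ioo a b)
    {ε : ℝ} (hε : 0 < ε) (hεx : ε < x - a) :
    (∫ y in Set.Ioo a (x - ε), 4 * x * deltaRho a b y / (x ^ 2 - y ^ 2))
      = pvH a b x (x - ε) - pvH a b x a := by
  obtain ⟨hax, hxb⟩ := hx
  have hx0 : 0 < x := ha.trans hax
  have hle : a ≤ x - ε := by linarith
  have hsub : Set.Icc a (x - ε) ⊆ Set.Icc a b := Set.Icc_subset_Icc le_rfl (by linarith)
  have hcont : ContinuousOn (pvH a b x) (Set.Icc a (x - ε)) :=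
    pvH_continuousOn a b x ha hab ⟨hax, hxb⟩ hsub (fun y hy => by
      have := hy.2; intro h; rw [h] at this; linarith)
  have hderiv : ∀ y ∈ Set.Ioo a (x - ε),
      HasDerivAt (pvH a b x) (4 * x * deltaRho a b y / (x ^ 2 - y ^ 2)) y := by
    intro y hy
    exact pvH_hasDerivAt a b x ha hab ⟨hax, hxb⟩ ⟨hy.1, by linarith [hy.2]⟩ (by
      intro h; rw [h] at hy; linarith [hy.2])
  have hnonneg : ∀ y ∈ Set.Ioo a (x - ε), 0 ≤ 4 * x * deltaRho a b y / (x ^ 2 - y ^ 2) := by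
    intro y hy
    have h1 : 0 < x ^ 2 - y ^ 2 := by
      have : 0 < y := ha.trans hy.1
      nlinarith [hy.2]
    have h2 := deltaRho_nonneg a b ha (⟨hy.1, by linarith [hy.2]⟩ : y ∈ Set.Ioo a b)
    positivity
  have hint : IntegrableOn (fun y => 4 * x * deltaRho a b y / (x ^ 2 - y ^ 2))
      (Set.Ioc a (x - ε)) :=
    intervalIntegral.integrableOn_deriv_of_nonneg hcont hderiv hnonneg
  have hii : IntervalIntegrable (fun y => 4 * x * deltaRho a b y / (x ^ 2 - y ^ 2)) volume a (x - ε) :=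
    (intervalIntegrable_iff_integrableOn_Ioc_of_le hle).2 hint
  have := intervalIntegral.integral_eq_sub_of_hasDerivAt_of_le hle hcont hderiv hii
  rw [intervalIntegral.integral_of_le hle, MeasureTheory.integral_Ioc_eq_integral_Ioo] at this
  exact this

lemma pv_right (a b x : ℝ) (ha : 0 < a) (hab : a < b) (hx : x ∈ Set.Ioo a b)
    {ε : ℝ} (hε : 0 < ε) (hεb : ε < b - x) :
    (∫ y in Set.Ioo (x + ε) b, 4 * x * deltaRho a b y / (x ^ 2 - y ^ 2))
      = pvH a b x b - pvH a b x (x + ε) := by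
  obtain ⟨hax, hxb⟩ := hx
  have hx0 : 0 < x := ha.trans hax
  have hle : x + ε ≤ b := by linarith
  have hsub : Set.Icc (x + ε) b ⊆ Set.Icc a b := Set.Icc_subset_Icc (by linarith) le_rfl
  have hcont : ContinuousOn (pvH a b x) (Set.Icc (x + ε) b) :=
    pvH_continuousOn a b x ha hab ⟨hax, hxb⟩ hsub (fun y hy => by
      have := hy.1; intro h; rw [h] at this; linarith)
  have hderiv : ∀ y ∈ Set.Ioo (x + ε) b,
      HasDerivAt (pvH a b x) (4 * x * deltaRho a b y / (x ^ 2 - y ^ 2)) y := by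
    intro y hy
    exact pvH_hasDerivAt a b x ha hab ⟨hax, hxb⟩ ⟨by linarith [hy.1], hy.2⟩ (by
      intro h; rw [h] at hy; linarith [hy.1])
  have hnonpos : ∀ y ∈ Set.Ioo (x + ε) b, 0 ≤ -(4 * x * deltaRho a b y / (x ^ 2 - y ^ 2)) := by
    intro y hy
    have h1 : x ^ 2 - y ^ 2 < 0 := by nlinarith [hy.1]
    have h2 := deltaRho_nonneg a b ha (⟨by linarith [hy.1], hy.2⟩ : y ∈ Set.Ioo a b)
    have : 4 * x * deltaRho a b y / (x ^ 2 - y ^ 2) ≤ 0 :=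
      div_nonpos_of_nonneg_of_nonpos (by positivity) h1.le
    linarith
  have hintneg : IntegrableOn (fun y => -(4 * x * deltaRho a b y / (x ^ 2 - y ^ 2)))
      (Set.Ioc (x + ε) b) :=
    intervalIntegral.integrableOn_deriv_of_nonneg (hcont.neg)
      (fun y hy => (hderiv y hy).neg) hnonpos
  have hint : IntegrableOn (fun y => 4 * x * deltaRho a b y / (x ^ 2 - y ^ 2))
      (Set.Ioc (x + ε) b) := by
    exact integrable_neg_iff.1 hintneg
  have hii : IntervalIntegrable (fun y => 4 * x * deltaRho a b y / (x ^ 2 - y ^ 2)) volume (x + ε) b :=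
    (intervalIntegrable_iff_integrableOn_Ioc_of_le hle).2 hint
  have := intervalIntegral.integral_eq_sub_of_hasDerivAt_of_le hle hcont hderiv hii
  rw [intervalIntegral.integral_of_le hle, MeasureTheory.integral_Ioc_eq_integral_Ioo] at this
  exact this

lemma pvH_endpoint (a b x : ℝ) (ha : 0 < a) (hab : a < b) (hx : x ∈ Set.Ioo a b) :
    pvH a b x a = 2 * x / (Real.pi * (Real.sqrt (x ^ 2 - a ^ 2) * Real.sqrt (b ^ 2 - x ^ 2)))
        * Real.log (b ^ 2 - a ^ 2)
    ∧ pvH a b x b = 2 * x / (Real.pi * (Real.sqrt (x ^ 2 - a ^ 2) * Real.sqrt (b ^ 2 - x ^ 2)))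
        * Real.log (b ^ 2 - a ^ 2) := by
  obtain ⟨hax, hxb⟩ := hx
  have hx0 : 0 < x := ha.trans hax
  have hp2 : (0:ℝ) < x ^ 2 - a ^ 2 := by nlinarith
  have hq2 : (0:ℝ) < b ^ 2 - x ^ 2 := by nlinarith
  have hΔ : (0:ℝ) < b ^ 2 - a ^ 2 := by nlinarith
  have hsp0 : 0 < Real.sqrt (x ^ 2 - a ^ 2) := Real.sqrt_pos.2 hp2
  have hsq0 : 0 < Real.sqrt (b ^ 2 - x ^ 2) := Real.sqrt_pos.2 hq2
  have hsΔ0 : 0 < Real.sqrt (b ^ 2 - a ^ 2) := Real.sqrt_pos.2 hΔ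
  constructor
  · unfold pvH
    rw [show a ^ 2 - a ^ 2 = (0:ℝ) by ring, Real.sqrt_zero, mul_zero, add_zero,
      Real.log_mul hsp0.ne' hsΔ0.ne', Real.log_sqrt hΔ.le,
      show Real.log (x ^ 2 - a ^ 2) = 2 * Real.log (Real.sqrt (x ^ 2 - a ^ 2)) by
        rw [Real.log_sqrt hp2.le]; ring]
    ring
  · unfold pvH
    rw [show b ^ 2 - b ^ 2 = (0:ℝ) by ring, Real.sqrt_zero, mul_zero, zero_add,
      Real.log_mul hsq0.ne' hsΔ0.ne', Real.log_sqrt hΔ.le,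
      show x ^ 2 - b ^ 2 = -(b ^ 2 - x ^ 2) by ring, Real.log_neg_eq_log,
      show Real.log (b ^ 2 - x ^ 2) = 2 * Real.log (Real.sqrt (b ^ 2 - x ^ 2)) by
        rw [Real.log_sqrt hq2.le]; ring]
    ring

lemma pv_limit (a b x : ℝ) (ha : 0 < a) (hab : a < b) (hx : x ∈ Set.Ioo a b) :
    Tendsto (fun ε : ℝ => pvH a b x (x - ε) - pvH a b x (x + ε)) (𝓝[>] 0) (𝓝 0) := by
  obtain ⟨hax, hxb⟩ := hx
  have hx0 : 0 < x := ha.trans hax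
  have hπ := Real.pi_pos
  set sp := Real.sqrt (x ^ 2 - a ^ 2) with hsp
  set sq' := Real.sqrt (b ^ 2 - x ^ 2) with hsq'
  have hp2 : (0:ℝ) < x ^ 2 - a ^ 2 := by nlinarith
  have hq2 : (0:ℝ) < b ^ 2 - x ^ 2 := by nlinarith
  have hsp0 : 0 < sp := Real.sqrt_pos.2 hp2
  have hsq0 : 0 < sq' := Real.sqrt_pos.2 hq2
  set c : ℝ := 2 * x / (Real.pi * (sp * sq')) with hc
  set N : ℝ → ℝ := fun y => sp * Real.sqrt (b ^ 2 - y ^ 2) + sq' * Real.sqrt (y ^ 2 - a ^ 2)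
    with hN
  have hNc : Continuous N := by fun_prop
  have hNx : 0 < N x := by
    have : N x = sp * sq' + sq' * sp := by rw [hN]
    rw [this]; positivity
  set m : ℝ := min (min (x - a) (b - x)) x with hm
  have hm0 : 0 < m := by
    apply lt_min (lt_min (by linarith) (by linarith)) hx0
  -- the eventual form
  set G : ℝ → ℝ := fun ε => c * (2 * Real.log (N (x - ε)) - 2 * Real.log (N (x + ε))
      + (Real.log (2 * x + ε) - Real.log (2 * x - ε))) with hG
  have heq : ∀ᶠ ε in 𝓝[>] (0:ℝ), pvH a b x (x - ε) - pvH a b x (x + ε) = G ε := by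
    filter_upwards [Ioo_mem_nhdsGT_of_mem (Set.mem_Ico.2 ⟨le_refl (0:ℝ), hm0⟩)] with ε hε
    obtain ⟨hε0, hεm⟩ := hε
    have hεx : ε < x := lt_of_lt_of_le hεm (min_le_right _ _)
    have l1 : Real.log (x ^ 2 - (x - ε) ^ 2) = Real.log ε + Real.log (2 * x - ε) := by
      rw [show x ^ 2 - (x - ε) ^ 2 = ε * (2 * x - ε) by ring,
        Real.log_mul hε0.ne' (by linarith : (0:ℝ) < 2 * x - ε).ne']
    have l2 : Real.log (x ^ 2 - (x + ε) ^ 2) = Real.log ε + Real.log (2 * x + ε) := by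
      rw [show x ^ 2 - (x + ε) ^ 2 = -(ε * (2 * x + ε)) by ring, Real.log_neg_eq_log,
        Real.log_mul hε0.ne' (by positivity : (0:ℝ) < 2 * x + ε).ne']
    unfold pvH
    rw [← hsp, ← hsq']
    have hNl : ∀ t : ℝ, sp * Real.sqrt (b ^ 2 - t ^ 2) + sq' * Real.sqrt (t ^ 2 - a ^ 2) = N t :=
      fun t => rfl
    rw [hNl, hNl, l1, l2, hG, hc]
    ring
  refine Tendsto.congr' (heq.mono fun ε h => h.symm) ?_
  have tsub : Tendsto (fun ε : ℝ => x - ε) (𝓝[>] 0) (𝓝 x) := by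
    have : Tendsto (fun ε : ℝ => x - ε) (𝓝 0) (𝓝 (x - 0)) :=
      (tendsto_const_nhds.sub tendsto_id)
    simpa using this.mono_left nhdsWithin_le_nhds
  have tadd : Tendsto (fun ε : ℝ => x + ε) (𝓝[>] 0) (𝓝 x) := by
    have : Tendsto (fun ε : ℝ => x + ε) (𝓝 0) (𝓝 (x + 0)) :=
      (tendsto_const_nhds.add tendsto_id)
    simpa using this.mono_left nhdsWithin_le_nhds
  have hlogN : ContinuousAt (fun t => Real.log (N t)) x :=
    (Real.continuousAt_log hNx.ne').comp hNc.continuousAt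
  have t1 : Tendsto (fun ε : ℝ => Real.log (N (x - ε))) (𝓝[>] 0) (𝓝 (Real.log (N x))) :=
    hlogN.tendsto.comp tsub
  have t2 : Tendsto (fun ε : ℝ => Real.log (N (x + ε))) (𝓝[>] 0) (𝓝 (Real.log (N x))) :=
    hlogN.tendsto.comp tadd
  have hlog2x : ContinuousAt Real.log (2 * x) := Real.continuousAt_log (by positivity)
  have t3 : Tendsto (fun ε : ℝ => Real.log (2 * x + ε)) (𝓝[>] 0) (𝓝 (Real.log (2 * x))) := by
    refine hlog2x.tendsto.comp ?_
    have : Tendsto (fun ε : ℝ => 2 * x + ε) (𝓝 0) (𝓝 (2 * x + 0)) :=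
      (tendsto_const_nhds.add tendsto_id)
    simpa using this.mono_left nhdsWithin_le_nhds
  have t4 : Tendsto (fun ε : ℝ => Real.log (2 * x - ε)) (𝓝[>] 0) (𝓝 (Real.log (2 * x))) := by
    refine hlog2x.tendsto.comp ?_
    have : Tendsto (fun ε : ℝ => 2 * x - ε) (𝓝 0) (𝓝 (2 * x - 0)) :=
      (tendsto_const_nhds.sub tendsto_id)
    simpa using this.mono_left nhdsWithin_le_nhds
  have tG := (((t1.const_mul 2).sub (t2.const_mul 2)).add (t3.sub t4)).const_mul c
  convert tG using 2
  ring

/-- The density `δρ(x) = x/(π√((b²−x²)(x²−a²)))` on `(a,b)` (with `0 < a < b`) has total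
mass `1/2`, and for every `x ∈ (a,b)` the principal value integral
`P.V. ∫_a^b 4x δρ(y)/(x²−y²) dy` vanishes. -/
theorem deltaRho_normalization_and_pv (a b : ℝ) (ha : 0 < a) (hab : a < b) :
    (∫ x in Set.Ioo a b, deltaRho a b x) = 1 / 2
      ∧ ∀ x ∈ Set.Ioo a b,
          Tendsto (fun ε : ℝ =>
              (∫ y in Set.Ioo a (x - ε), 4 * x * deltaRho a b y / (x ^ 2 - y ^ 2))
                + ∫ y in Set.Ioo (x + ε) b, 4 * x * deltaRho a b y / (x ^ 2 - y ^ 2))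
            (𝓝[>] 0) (𝓝 0) := by
  refine ⟨part1 a b ha hab, ?_⟩
  intro x hx
  obtain ⟨hax, hxb⟩ := hx
  have hm0 : 0 < min (x - a) (b - x) := lt_min (by linarith) (by linarith)
  have heq : ∀ᶠ ε in 𝓝[>] (0:ℝ),
      (∫ y in Set.Ioo a (x - ε), 4 * x * deltaRho a b y / (x ^ 2 - y ^ 2))
        + (∫ y in Set.Ioo (x + ε) b, 4 * x * deltaRho a b y / (x ^ 2 - y ^ 2))
      = pvH a b x (x - ε) - pvH a b x (x + ε) := by
    filter_upwards [Ioo_mem_nhdsGT_of_mem (Set.mem_Ico.2 ⟨le_refl (0:ℝ), hm0⟩)] with ε hε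
    obtain ⟨hε0, hεm⟩ := hε
    have hεx : ε < x - a := lt_of_lt_of_le hεm (min_le_left _ _)
    have hεb : ε < b - x := lt_of_lt_of_le hεm (min_le_right _ _)
    rw [pv_left a b x ha hab ⟨hax, hxb⟩ hε0 hεx, pv_right a b x ha hab ⟨hax, hxb⟩ hε0 hεb]
    obtain ⟨e1, e2⟩ := pvH_endpoint a b x ha hab ⟨hax, hxb⟩
    rw [e1, e2]
    ring
  exact Tendsto.congr' (heq.mono fun ε h => h.symm) (pv_limit a b x ha hab ⟨hax, hxb⟩)
end

section
/- With δρ(x) = x/(π√((b²−x²)(x²−a²))) on (a,b) (0 < a < b), the following two integrals evaluate in closed form: 2·∫_a^b δρ(y)·log|x²−y²| dy = log((b²−a²)/4) for all x ∈ (a,b), and ∫_a^b δρ(x)·log x dx = (1/2)·log((a+b)/2). -/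
open Finset Real MeasureTheory Set
open intervalIntegral

lemma intervalIntegrable_log_all (a b : ℝ) : IntervalIntegrable Real.log volume a b := by
  have key : ∀ c : ℝ, 0 ≤ c → IntervalIntegrable Real.log volume 0 c := by
    intro c hc
    have h01 : IntervalIntegrable Real.log volume 0 1 := by
      have h : IntegrableOn (fun x => -Real.log x) (Set.Ioc (0:ℝ) 1) := by
        apply intervalIntegral.integrableOn_deriv_of_nonneg
          (g := fun x => x - x * Real.log x)
        · exact (continuous_id.sub Real.continuous_mul_log).continuousOn
        · intro x hx
          have hx0 : x ≠ 0 := ne_of_gt hx.1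
          have h1 := (hasDerivAt_id x).sub (Real.hasDerivAt_mul_log hx0)
          have : (1:ℝ) - (Real.log x + 1) = -Real.log x := by ring
          rw [← this]
          exact h1
        · intro x hx
          have : Real.log x ≤ 0 := Real.log_nonpos hx.1.le hx.2.le
          linarith
      have h2 : IntegrableOn (fun x => Real.log x) (Set.Ioc (0:ℝ) 1) := by
        exact h.neg.congr (Filter.EventuallyEq.of_eq (funext fun x => by simp))
      rw [intervalIntegrable_iff_integrableOn_Ioc_of_le zero_le_one]
      exact h2
    rcases le_total c 1 with h | h
    · refine h01.mono_set (Set.uIcc_subset_uIcc Set.left_mem_uIcc ?_)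
      rw [Set.uIcc_of_le zero_le_one]
      exact ⟨hc, h⟩
    · refine h01.trans ?_
      refine intervalIntegrable_log ?_
      rw [Set.uIcc_of_le h]
      rintro ⟨h1, -⟩
      linarith
  have key2 : ∀ c : ℝ, IntervalIntegrable Real.log volume 0 c := by
    intro c
    rcases le_total 0 c with h | h
    · exact key c h
    · rw [IntervalIntegrable.iff_comp_neg]
      have heq : (fun x => Real.log (-x)) = Real.log := by
        funext x; rw [Real.log_neg_eq_log]
      rw [heq]
      simpa using key (-c) (by linarith)
  exact ((key2 a).symm.trans (key2 b))

/-- `log (1 - cos θ)` is interval integrable on `[-π, π]` (and subintervals). -/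
lemma intervalIntegrable_log_one_sub_cos {a b : ℝ} (ha : -π ≤ a) (hb : b ≤ π) (hab : a ≤ b) :
    IntervalIntegrable (fun θ => Real.log (1 - Real.cos θ)) volume a b := by
  have base : IntervalIntegrable (fun θ => Real.log (1 - Real.cos θ)) volume (-π) π := by
    rw [intervalIntegrable_iff_integrableOn_Ioc_of_le (by linarith [Real.pi_pos])]
    have hg : IntegrableOn (fun θ => 2 * |Real.log θ| + Real.log (π^2/2)) (Set.Ioc (-π) π) := by
      have h1 : IntervalIntegrable (fun θ => 2 * |Real.log θ| + Real.log (π^2/2)) volume (-π) π := by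
        exact (((intervalIntegrable_log_all (-π) π).abs).const_mul 2).add
          (intervalIntegrable_const)
      rw [intervalIntegrable_iff_integrableOn_Ioc_of_le (by linarith [Real.pi_pos])] at h1
      exact h1
    refine Integrable.mono' hg ?_ ?_
    · exact ((measurable_const.sub Real.measurable_cos).log).aestronglyMeasurable
    · -- a.e. bound
      refine (ae_restrict_iff' measurableSet_Ioc).2 ?_
      have h0 : ∀ᵐ (θ : ℝ), θ ∉ ({0} : Set ℝ) :=
        compl_mem_ae_iff.2 (measure_singleton (0:ℝ))
      filter_upwards [h0] with θ hθ hmem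
      have hθ0 : θ ≠ 0 := by simpa using hθ
      have habs : |θ| ≤ π := abs_le.2 ⟨by linarith [hmem.1.le], hmem.2⟩
      have hlow : 2/π^2 * θ^2 ≤ 1 - Real.cos θ := by
        have := Real.cos_le_one_sub_mul_cos_sq habs
        linarith
      have hup : 1 - Real.cos θ ≤ θ^2/2 := by
        have := Real.one_sub_sq_div_two_le_cos (x := θ)
        linarith
      have hθ2 : 0 < θ^2 := by positivity
      have hpos : 0 < 2/π^2 * θ^2 := by positivity
      have hlog_low : Real.log (2/π^2) + Real.log (θ^2) ≤ Real.log (1 - Real.cos θ) := by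
        rw [← Real.log_mul (by positivity) (ne_of_gt hθ2)]
        exact Real.log_le_log (by positivity) hlow
      have hlog_up : Real.log (1 - Real.cos θ) ≤ Real.log (θ^2) - Real.log 2 := by
        have : Real.log (1 - Real.cos θ) ≤ Real.log (θ^2/2) :=
          Real.log_le_log (by linarith) hup
        rwa [Real.log_div (ne_of_gt hθ2) two_ne_zero] at this
      have hsq : Real.log (θ^2) = 2 * Real.log θ := by
        rw [Real.log_pow]; push_cast; ring
      have h2 : Real.log (2/π^2) = - Real.log (π^2/2) := by
        rw [← Real.log_inv]; norm_num
      have hC : 0 < Real.log (π^2/2) := by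
        refine Real.log_pos ?_
        nlinarith [Real.pi_gt_three]
      have hlog2 : Real.log 2 ≤ Real.log (π^2/2) := by
        refine Real.log_le_log two_pos ?_
        nlinarith [Real.pi_gt_three]
      have hl2 : 0 < Real.log 2 := Real.log_pos one_lt_two
      have hub := le_abs_self (Real.log θ)
      have hlb := neg_abs_le (Real.log θ)
      rw [Real.norm_eq_abs, abs_le]
      constructor
      · rw [hsq] at hlog_low; rw [h2] at hlog_low; linarith
      · rw [hsq] at hlog_up; linarith
  exact base.mono_set (Set.uIcc_subset_uIcc
    (by rw [Set.uIcc_of_le (by linarith [Real.pi_pos])]; exact ⟨ha, by linarith⟩)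
    (by rw [Set.uIcc_of_le (by linarith [Real.pi_pos])]; exact ⟨by linarith, hb⟩))

lemma one_sub_cos_pos {u : ℝ} (h0 : u ≠ 0) (hl : -(2*π) < u) (hr : u < 2*π) :
    0 < 1 - Real.cos u := by
  have h1 : Real.cos u ≠ 1 := by
    intro h
    exact h0 ((Real.cos_eq_one_iff_of_lt_of_lt hl hr).1 h)
  have := Real.cos_le_one u
  cases lt_or_eq_of_le this with
  | inl h => linarith
  | inr h => exact absurd h h1

lemma integral_log_one_sub_cos : ∫ θ in (0:ℝ)..π, Real.log (1 - Real.cos θ) = -π * Real.log 2 := by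
  have hpi := Real.pi_pos
  set H := ∫ θ in (0:ℝ)..π, Real.log (1 - Real.cos θ) with hH
  -- doubling substitution
  have hsub : ∫ u in (0:ℝ)..(π/2), Real.log (1 - Real.cos (2*u)) = (2:ℝ)⁻¹ * H := by
    have h2 := intervalIntegral.integral_comp_mul_left
      (fun θ => Real.log (1 - Real.cos θ)) (two_ne_zero (α := ℝ)) (a := 0) (b := π/2)
    rw [show (2:ℝ)*(π/2) = π by ring, show (2:ℝ)*0 = 0 by ring] at h2
    simpa [smul_eq_mul] using h2
  -- pointwise identity a.e.
  have hae : ∫ u in (0:ℝ)..(π/2), Real.log (1 - Real.cos (2*u))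
      = ∫ u in (0:ℝ)..(π/2),
          (Real.log 2 + Real.log (1 - Real.cos u) + Real.log (1 + Real.cos u)) := by
    apply intervalIntegral.integral_congr_ae
    have h0 : ∀ᵐ (u : ℝ), u ∉ ({0} : Set ℝ) := compl_mem_ae_iff.2 (measure_singleton (0:ℝ))
    filter_upwards [h0] with u hu0 hmem
    rw [Set.uIoc_of_le (by linarith)] at hmem
    have hu : 0 < u := lt_of_le_of_ne hmem.1.le (by simpa [eq_comm] using hu0)
    have hu2 : u ≤ π/2 := hmem.2
    have hc1 : 0 < 1 - Real.cos u :=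
      one_sub_cos_pos hu.ne' (by linarith) (by linarith)
    have hc2 : 0 < 1 + Real.cos u := by
      have : 0 ≤ Real.cos u := Real.cos_nonneg_of_mem_Icc ⟨by linarith, hu2⟩
      linarith
    have hid : 1 - Real.cos (2*u) = 2 * ((1 - Real.cos u) * (1 + Real.cos u)) := by
      have := Real.cos_two_mul u
      nlinarith [Real.sin_sq_add_cos_sq u]
    rw [hid, Real.log_mul two_ne_zero (by positivity),
        Real.log_mul (ne_of_gt hc1) (ne_of_gt hc2)]
    ring
  -- split the integral of the sum
  have int1 : IntervalIntegrable (fun u => Real.log (1 - Real.cos u)) volume 0 (π/2) :=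
    intervalIntegrable_log_one_sub_cos (by linarith) (by linarith) (by linarith)
  have int2 : IntervalIntegrable (fun u => Real.log (1 + Real.cos u)) volume 0 (π/2) := by
    apply ContinuousOn.intervalIntegrable
    apply ContinuousOn.log
    · exact (continuous_const.add Real.continuous_cos).continuousOn
    · intro u hu
      rw [Set.uIcc_of_le (by linarith)] at hu
      have : 0 ≤ Real.cos u := Real.cos_nonneg_of_mem_Icc ⟨by linarith [hu.1], hu.2⟩
      positivity
  have hsplit : ∫ u in (0:ℝ)..(π/2),
        (Real.log 2 + Real.log (1 - Real.cos u) + Real.log (1 + Real.cos u))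
      = (π/2) * Real.log 2 + (∫ u in (0:ℝ)..(π/2), Real.log (1 - Real.cos u))
        + ∫ u in (0:ℝ)..(π/2), Real.log (1 + Real.cos u) := by
    rw [intervalIntegral.integral_add (intervalIntegrable_const.add int1) int2,
        intervalIntegral.integral_add intervalIntegrable_const int1,
        intervalIntegral.integral_const]
    simp only [smul_eq_mul]
    ring
  -- reflection: ∫₀^{π/2} log(1+cos u) = ∫_{π/2}^π log(1-cos)
  have hrefl : ∫ u in (0:ℝ)..(π/2), Real.log (1 + Real.cos u)
      = ∫ θ in (π/2)..π, Real.log (1 - Real.cos θ) := by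
    have hpt : ∀ u : ℝ, Real.log (1 + Real.cos u) = Real.log (1 - Real.cos (π - u)) := by
      intro u; rw [Real.cos_pi_sub]; ring_nf
    simp_rw [hpt]
    have := intervalIntegral.integral_comp_sub_left
      (a := (0:ℝ)) (b := π/2) (fun θ => Real.log (1 - Real.cos θ)) π
    rw [this, show π - π/2 = π/2 by ring, sub_zero]
  -- adjacent intervals
  have hadj : (∫ u in (0:ℝ)..(π/2), Real.log (1 - Real.cos u))
      + (∫ θ in (π/2)..π, Real.log (1 - Real.cos θ)) = H := by
    exact intervalIntegral.integral_add_adjacent_intervals int1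
      (intervalIntegrable_log_one_sub_cos (by linarith) le_rfl (by linarith))
  have : (2:ℝ)⁻¹ * H = (π/2) * Real.log 2 + H := by
    rw [← hsub, hae, hsplit, hrefl]
    linarith [hadj]
  linarith

lemma intervalIntegrable_log_one_sub_cos' {a b : ℝ} (ha : 0 < a) (hb : b < 2*π) (hab : a ≤ b) :
    IntervalIntegrable (fun θ => Real.log (1 - Real.cos θ)) volume a b := by
  apply ContinuousOn.intervalIntegrable
  apply ContinuousOn.log
  · exact (continuous_const.sub Real.continuous_cos).continuousOn
  · intro θ hθ
    rw [Set.uIcc_of_le hab] at hθ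
    have := one_sub_cos_pos (u := θ) (by linarith [hθ.1]) (by linarith [Real.pi_pos, hθ.1])
      (by linarith [hθ.2])
    exact this.ne'

lemma integral_log_abs_cos_sub_cos {ψ : ℝ} (hψ : ψ ∈ Set.Ioo 0 π) :
    ∫ φ in (0:ℝ)..π, Real.log |Real.cos ψ - Real.cos φ| = -π * Real.log 2 := by
  have hpi := Real.pi_pos
  obtain ⟨hψ0, hψπ⟩ := hψ
  set h : ℝ → ℝ := fun θ => Real.log (1 - Real.cos θ) with hh
  -- integrability of the two shifted pieces
  have int_sub : IntervalIntegrable (fun φ => h (φ - ψ)) volume 0 π := by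
    have := (intervalIntegrable_log_one_sub_cos (a := -ψ) (b := π - ψ)
      (by linarith) (by linarith) (by linarith)).comp_sub_right ψ
    simpa using this
  have int_add : IntervalIntegrable (fun φ => h (φ + ψ)) volume 0 π := by
    have := (intervalIntegrable_log_one_sub_cos' (a := ψ) (b := π + ψ)
      hψ0 (by linarith) (by linarith)).comp_add_right ψ
    simpa using this
  -- a.e. identity
  have hae : ∫ φ in (0:ℝ)..π, Real.log |Real.cos ψ - Real.cos φ|
      = ∫ φ in (0:ℝ)..π, (2:ℝ)⁻¹ * (h (φ - ψ) + h (φ + ψ)) := by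
    apply intervalIntegral.integral_congr_ae
    have h0 : ∀ᵐ (φ : ℝ), φ ∉ ({ψ} : Set ℝ) := compl_mem_ae_iff.2 (measure_singleton ψ)
    filter_upwards [h0] with φ hφψ hmem
    rw [Set.uIoc_of_le hpi.le] at hmem
    have hφψ' : φ ≠ ψ := by simpa using hφψ
    have hm1 : 0 < φ := hmem.1
    have hm2 : φ ≤ π := hmem.2
    have h1 : 0 < 1 - Real.cos (φ - ψ) :=
      one_sub_cos_pos (sub_ne_zero.2 hφψ') (by linarith) (by linarith)
    have h2 : 0 < 1 - Real.cos (φ + ψ) :=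
      one_sub_cos_pos (by linarith : (0:ℝ) < φ + ψ).ne' (by linarith) (by linarith)
    have hkey : (Real.cos ψ - Real.cos φ)^2
        = (1 - Real.cos (φ - ψ)) * (1 - Real.cos (φ + ψ)) := by
      rw [Real.cos_sub, Real.cos_add]
      nlinarith [Real.sin_sq_add_cos_sq φ, Real.sin_sq_add_cos_sq ψ]
    have hne : Real.cos ψ - Real.cos φ ≠ 0 := by
      intro hcc
      rw [hcc] at hkey
      simp at hkey
      rcases hkey with h | h <;> nlinarith
    have hp : 2 * Real.log (Real.cos ψ - Real.cos φ) = h (φ - ψ) + h (φ + ψ) := by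
      have hq := Real.log_pow (Real.cos ψ - Real.cos φ) 2
      rw [hkey, Real.log_mul h1.ne' h2.ne'] at hq
      push_cast at hq
      linarith
    rw [← Real.log_abs] at hp
    linarith
  rw [hae, intervalIntegral.integral_const_mul,
      intervalIntegral.integral_add int_sub int_add]
  -- compute the two shifted integrals
  have e_add : ∫ φ in (0:ℝ)..π, h (φ + ψ) = ∫ θ in ψ..(π+ψ), h θ := by
    have := intervalIntegral.integral_comp_add_right (a := (0:ℝ)) (b := π) h ψ
    rw [this, zero_add, add_comm π ψ]
  have e_sub : ∫ φ in (0:ℝ)..π, h (φ - ψ) = ∫ θ in (ψ-π)..ψ, h θ := by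
    have h1 := intervalIntegral.integral_comp_sub_right (a := (0:ℝ)) (b := π) h ψ
    have heven : ∀ x : ℝ, h (-x) = h x := fun x => by simp [hh, Real.cos_neg]
    have h2 := intervalIntegral.integral_comp_neg (a := ψ - π) (b := ψ) h
    rw [h1, zero_sub]
    rw [show -(ψ:ℝ) = -ψ from rfl] at h2
    -- h2 : ∫ x in (ψ-π)..ψ, h (-x) = ∫ x in -ψ..-(ψ-π), h x
    have h3 : ∫ x in (ψ-π)..ψ, h x = ∫ x in (ψ-π)..ψ, h (-x) := by
      apply intervalIntegral.integral_congr
      intro x _; exact (heven x).symm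
    rw [h3, h2, show -(ψ-π) = π - ψ by ring]
  rw [e_add, e_sub]
  -- adjacent + periodicity + evenness
  have int_left : IntervalIntegrable h volume (ψ-π) ψ :=
    intervalIntegrable_log_one_sub_cos (by linarith) (by linarith) (by linarith)
  have int_right : IntervalIntegrable h volume ψ (π+ψ) :=
    intervalIntegrable_log_one_sub_cos' hψ0 (by linarith) (by linarith)
  have hadj : (∫ θ in (ψ-π)..ψ, h θ) + (∫ θ in ψ..(π+ψ), h θ) = ∫ θ in (ψ-π)..(π+ψ), h θ :=
    intervalIntegral.integral_add_adjacent_intervals int_left int_right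
  have hper : Function.Periodic h (2*π) := by
    intro x; simp [hh, Real.cos_add_two_pi]
  have hshift : ∫ θ in (ψ-π)..(π+ψ), h θ = ∫ θ in (-π)..π, h θ := by
    have := hper.intervalIntegral_add_eq (ψ-π) (-π)
    rw [show ψ - π + 2*π = π + ψ by ring, show -π + 2*π = π by ring] at this
    exact this
  have hsplit2 : ∫ θ in (-π)..π, h θ = 2 * ∫ θ in (0:ℝ)..π, h θ := by
    have i1 : IntervalIntegrable h volume (-π) 0 :=
      intervalIntegrable_log_one_sub_cos le_rfl hpi.le (by linarith)
    have i2 : IntervalIntegrable h volume 0 π :=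
      intervalIntegrable_log_one_sub_cos (by linarith) le_rfl hpi.le
    have hadj2 := intervalIntegral.integral_add_adjacent_intervals i1 i2
    have heven : ∫ θ in (-π)..(0:ℝ), h θ = ∫ θ in (0:ℝ)..π, h θ := by
      have h2 := intervalIntegral.integral_comp_neg (a := (0:ℝ)) (b := π) h
      have h3 : ∫ x in (0:ℝ)..π, h x = ∫ x in (0:ℝ)..π, h (-x) := by
        apply intervalIntegral.integral_congr
        intro x _; show h x = h (-x); simp only [hh, Real.cos_neg]
      rw [h3, h2, neg_zero]
    rw [← hadj2, heven]
    ring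
  rw [hadj, hshift, hsplit2, integral_log_one_sub_cos]
  ring

lemma quad_pos {ρ : ℝ} (h0 : 0 ≤ ρ) (h1 : ρ < 1) (φ : ℝ) :
    (1-ρ)^2 ≤ 1 - 2*ρ*Real.cos φ + ρ^2 := by
  have := Real.cos_le_one φ
  nlinarith

lemma quad_le {ρ : ℝ} (h0 : 0 ≤ ρ) (φ : ℝ) :
    1 - 2*ρ*Real.cos φ + ρ^2 ≤ (1+ρ)^2 := by
  have := Real.neg_one_le_cos φ
  nlinarith

lemma K_cont_integrable {ρ : ℝ} (h0 : 0 ≤ ρ) (h1 : ρ < 1) {a b : ℝ} :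
    IntervalIntegrable (fun φ => Real.log (1 - 2*ρ*Real.cos φ + ρ^2)) volume a b := by
  apply ContinuousOn.intervalIntegrable
  apply ContinuousOn.log
  · fun_prop
  · intro φ _
    have := quad_pos h0 h1 φ
    nlinarith

lemma integral_log_quadratic_zero {ρ : ℝ} (h0 : 0 ≤ ρ) (h1 : ρ < 1) :
    ∫ φ in (0:ℝ)..π, Real.log (1 - 2*ρ*Real.cos φ + ρ^2) = 0 := by
  have hpi := Real.pi_pos
  set K : ℝ → ℝ := fun t => ∫ φ in (0:ℝ)..π, Real.log (1 - 2*t*Real.cos φ + t^2) with hK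
  -- doubling: K (t^2) = 2 * K t for 0 ≤ t < 1
  have hdouble : ∀ t : ℝ, 0 ≤ t → t < 1 → K (t^2) = 2 * K t := by
    intro t ht0 ht1
    have hsub : ∫ u in (0:ℝ)..(π/2), Real.log (1 - 2*t^2*Real.cos (2*u) + (t^2)^2)
        = (2:ℝ)⁻¹ * K (t^2) := by
      have h2 := intervalIntegral.integral_comp_mul_left
        (fun φ => Real.log (1 - 2*t^2*Real.cos φ + (t^2)^2)) (two_ne_zero (α := ℝ))
        (a := 0) (b := π/2)
      rw [show (2:ℝ)*(π/2) = π by ring, show (2:ℝ)*0 = 0 by ring] at h2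
      simpa [smul_eq_mul] using h2
    have hpt : ∀ u : ℝ, Real.log (1 - 2*t^2*Real.cos (2*u) + (t^2)^2)
        = Real.log (1 - 2*t*Real.cos u + t^2) + Real.log (1 + 2*t*Real.cos u + t^2) := by
      intro u
      have hid : 1 - 2*t^2*Real.cos (2*u) + (t^2)^2
          = (1 - 2*t*Real.cos u + t^2) * (1 + 2*t*Real.cos u + t^2) := by
        rw [Real.cos_two_mul]
        ring
      have hp1 : 0 < 1 - 2*t*Real.cos u + t^2 := by nlinarith [quad_pos ht0 ht1 u]
      have hp2 : 0 < 1 + 2*t*Real.cos u + t^2 := by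
        have h := Real.neg_one_le_cos u
        nlinarith
      rw [hid, Real.log_mul hp1.ne' hp2.ne']
    have hint1 : IntervalIntegrable (fun u => Real.log (1 - 2*t*Real.cos u + t^2))
        volume 0 (π/2) := K_cont_integrable ht0 ht1
    have hint2 : IntervalIntegrable (fun u => Real.log (1 + 2*t*Real.cos u + t^2))
        volume 0 (π/2) := by
      apply ContinuousOn.intervalIntegrable
      apply ContinuousOn.log
      · fun_prop
      · intro φ _
        have h := Real.neg_one_le_cos φ
        nlinarith
    have hsplit : ∫ u in (0:ℝ)..(π/2), Real.log (1 - 2*t^2*Real.cos (2*u) + (t^2)^2)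
        = (∫ u in (0:ℝ)..(π/2), Real.log (1 - 2*t*Real.cos u + t^2))
          + ∫ u in (0:ℝ)..(π/2), Real.log (1 + 2*t*Real.cos u + t^2) := by
      simp_rw [hpt]
      exact intervalIntegral.integral_add hint1 hint2
    have hrefl : ∫ u in (0:ℝ)..(π/2), Real.log (1 + 2*t*Real.cos u + t^2)
        = ∫ v in (π/2)..π, Real.log (1 - 2*t*Real.cos v + t^2) := by
      have hpt2 : ∀ u : ℝ, Real.log (1 + 2*t*Real.cos u + t^2)
          = Real.log (1 - 2*t*Real.cos (π - u) + t^2) := by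
        intro u; rw [Real.cos_pi_sub]; ring_nf
      simp_rw [hpt2]
      have := intervalIntegral.integral_comp_sub_left (a := (0:ℝ)) (b := π/2)
        (fun v => Real.log (1 - 2*t*Real.cos v + t^2)) π
      rw [this, show π - π/2 = π/2 by ring, sub_zero]
    have hadj : (∫ u in (0:ℝ)..(π/2), Real.log (1 - 2*t*Real.cos u + t^2))
        + (∫ v in (π/2)..π, Real.log (1 - 2*t*Real.cos v + t^2)) = K t :=
      intervalIntegral.integral_add_adjacent_intervals (K_cont_integrable ht0 ht1)
        (K_cont_integrable ht0 ht1)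
    have : (2:ℝ)⁻¹ * K (t^2) = K t := by
      rw [← hsub, hsplit, hrefl, hadj]
    linarith
  -- bound: |K t| ≤ π * (-2 * log (1-t))
  have hbound : ∀ t : ℝ, 0 ≤ t → t < 1 → |K t| ≤ π * (-2 * Real.log (1-t)) := by
    intro t ht0 ht1
    have hb : ∀ φ ∈ Set.Icc (0:ℝ) π, ‖Real.log (1 - 2*t*Real.cos φ + t^2)‖
        ≤ -2 * Real.log (1-t) := by
      intro φ _
      have hp1 : (0:ℝ) < (1-t)^2 := pow_pos (by linarith) 2
      have hlow := quad_pos ht0 ht1 φ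
      have hup := quad_le ht0 φ
      have hpos : 0 < 1 - 2*t*Real.cos φ + t^2 := lt_of_lt_of_le hp1 hlow
      rw [Real.norm_eq_abs, abs_le]
      constructor
      · have : Real.log ((1-t)^2) ≤ Real.log (1 - 2*t*Real.cos φ + t^2) :=
          Real.log_le_log hp1 hlow
        rw [Real.log_pow (1-t) 2] at this
        push_cast at this
        linarith
      · have h1' : Real.log (1 - 2*t*Real.cos φ + t^2) ≤ Real.log ((1+t)^2) :=
          Real.log_le_log hpos hup
        rw [Real.log_pow (1+t) 2] at h1'
        push_cast at h1'
        have h1t : (0:ℝ) < 1 - t := by linarith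
        have h2' : Real.log (1+t) ≤ -Real.log (1-t) := by
          rw [← Real.log_inv]
          apply Real.log_le_log (by linarith)
          rw [inv_eq_one_div, le_div_iff₀ h1t]
          nlinarith
        linarith
    have := intervalIntegral.norm_integral_le_of_norm_le_const (C := -2 * Real.log (1-t))
      (by intro x hx; exact hb x (by
        rw [Set.uIoc_of_le hpi.le] at hx; exact ⟨hx.1.le, hx.2⟩))
    rw [Real.norm_eq_abs] at this
    calc |K t| ≤ (-2 * Real.log (1-t)) * |π - 0| := this
    _ = π * (-2 * Real.log (1-t)) := by rw [abs_of_pos (by linarith)]; ring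
  rcases eq_or_lt_of_le h0 with rfl | hρpos
  · simp [hK]
  -- iterate the doubling
  have hiter : ∀ n : ℕ, K ρ = K (ρ^(2^n)) / 2^n := by
    intro n
    induction n with
    | zero => simp
    | succ n ih =>
      have hρn0 : (0:ℝ) ≤ ρ^(2^n) := by positivity
      have hρn1 : ρ^(2^n) < 1 := pow_lt_one₀ h0 h1 (by positivity)
      have hd := hdouble _ hρn0 hρn1
      rw [← pow_mul, show 2^n * 2 = 2^(n+1) by ring] at hd
      rw [ih, hd]
      ring_nf
  have hC : ∀ n : ℕ, |K ρ| ≤ π * (-2 * Real.log (1-ρ)) / 2^n := by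
    intro n
    have hρn0 : (0:ℝ) ≤ ρ^(2^n) := by positivity
    have hρn1 : ρ^(2^n) < 1 := pow_lt_one₀ h0 h1 (by positivity)
    have hb := hbound _ hρn0 hρn1
    have hle : ρ^(2^n) ≤ ρ := by
      have := pow_le_pow_of_le_one h0 h1.le (Nat.one_le_two_pow (n := n))
      simpa using this
    have hmono : -2 * Real.log (1-ρ^(2^n)) ≤ -2 * Real.log (1-ρ) := by
      have hll : Real.log (1-ρ) ≤ Real.log (1-ρ^(2^n)) :=
        Real.log_le_log (by linarith) (by linarith)
      linarith
    rw [hiter n, abs_div, abs_of_pos (by positivity : (0:ℝ) < (2:ℝ)^n)]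
    gcongr
    calc |K (ρ^(2^n))| ≤ π * (-2 * Real.log (1-ρ^(2^n))) := hb
    _ ≤ π * (-2 * Real.log (1-ρ)) := mul_le_mul_of_nonneg_left hmono hpi.le
  have hlim : Filter.Tendsto (fun n : ℕ => π * (-2 * Real.log (1-ρ)) / 2^n)
      Filter.atTop (nhds 0) := by
    have h2 : Filter.Tendsto (fun n : ℕ => ((1:ℝ)/2)^n) Filter.atTop (nhds 0) :=
      tendsto_pow_atTop_nhds_zero_of_lt_one (by norm_num) (by norm_num)
    have := h2.const_mul (π * (-2 * Real.log (1-ρ)))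
    rw [mul_zero] at this
    convert this using 2 with n
    rw [div_pow, one_pow]
    ring
  have hfin : |K ρ| ≤ 0 := ge_of_tendsto' hlim hC
  have : K ρ = 0 := abs_eq_zero.1 (le_antisymm hfin (abs_nonneg _))
  simpa [hK] using this

lemma integral_log_c_add_r_cos {c r : ℝ} (hr : 0 < r) (hcr : r < c) :
    ∫ φ in (0:ℝ)..π, Real.log (c + r*Real.cos φ)
      = π * Real.log ((c + Real.sqrt (c^2 - r^2))/2) := by
  have hpi := Real.pi_pos
  set d := Real.sqrt (c^2 - r^2) with hd
  have hc : 0 < c := lt_trans hr hcr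
  have hd2 : d^2 = c^2 - r^2 := Real.sq_sqrt (by nlinarith)
  have hd0 : 0 ≤ d := Real.sqrt_nonneg _
  have hdc : d < c := by nlinarith
  set ρ := (c - d)/r with hρ
  have hρ0 : 0 < ρ := div_pos (by linarith) hr
  have hρ1 : ρ < 1 := by
    rw [hρ, div_lt_one hr]
    nlinarith
  have hkey : ∀ φ : ℝ, c + r*Real.cos φ = (r/(2*ρ)) * (1 + 2*ρ*Real.cos φ + ρ^2) := by
    intro φ
    have hrρ : r * (1 + ρ^2) = 2*ρ*c := by
      rw [hρ]
      field_simp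
      nlinarith
    field_simp
    nlinarith [hrρ]
  have hpos2 : ∀ φ : ℝ, 0 < 1 + 2*ρ*Real.cos φ + ρ^2 := by
    intro φ
    have := Real.neg_one_le_cos φ
    nlinarith
  have hcoef : 0 < r/(2*ρ) := by positivity
  have hsplit : ∫ φ in (0:ℝ)..π, Real.log (c + r*Real.cos φ)
      = π * Real.log (r/(2*ρ)) + ∫ φ in (0:ℝ)..π, Real.log (1 + 2*ρ*Real.cos φ + ρ^2) := by
    have hpt : ∀ φ : ℝ, Real.log (c + r*Real.cos φ)
        = Real.log (r/(2*ρ)) + Real.log (1 + 2*ρ*Real.cos φ + ρ^2) := by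
      intro φ
      rw [hkey φ, Real.log_mul hcoef.ne' (hpos2 φ).ne']
    simp_rw [hpt]
    rw [intervalIntegral.integral_add intervalIntegrable_const]
    · simp [smul_eq_mul]
    · apply ContinuousOn.intervalIntegrable
      apply ContinuousOn.log
      · fun_prop
      · intro φ _; exact (hpos2 φ).ne'
  have hzero : ∫ φ in (0:ℝ)..π, Real.log (1 + 2*ρ*Real.cos φ + ρ^2) = 0 := by
    have hpt2 : ∀ φ : ℝ, Real.log (1 + 2*ρ*Real.cos φ + ρ^2)
        = Real.log (1 - 2*ρ*Real.cos (π - φ) + ρ^2) := by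
      intro φ; rw [Real.cos_pi_sub]; ring_nf
    simp_rw [hpt2]
    have := intervalIntegral.integral_comp_sub_left (a := (0:ℝ)) (b := π)
      (fun v => Real.log (1 - 2*ρ*Real.cos v + ρ^2)) π
    rw [this, sub_self, sub_zero]
    exact integral_log_quadratic_zero hρ0.le hρ1
  rw [hsplit, hzero, add_zero]
  congr 1
  have : r/(2*ρ) = (c + d)/2 := by
    have hcd0 : c - d ≠ 0 := by linarith
    rw [hρ]
    field_simp
    nlinarith [hd2]
  rw [this]

/-- Change of variables `y = √(c + r cos φ)` turning `δρ`-integrals into uniform ones. -/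
lemma deltaRho_cov (a b : ℝ) (ha : 0 < a) (hab : a < b) (g : ℝ → ℝ) :
    ∫ y in Set.Ioo a b, deltaRho a b y * g y
      = (2*π)⁻¹ * ∫ φ in (0:ℝ)..π,
          g (Real.sqrt ((a^2+b^2)/2 + (b^2-a^2)/2 * Real.cos φ)) := by
  have hpi := Real.pi_pos
  set c := (a^2+b^2)/2 with hc
  set r := (b^2-a^2)/2 with hr
  have hr0 : 0 < r := by rw [hr]; nlinarith
  have hcr : r < c := by rw [hr, hc]; nlinarith
  have hca : c - r = a^2 := by rw [hr, hc]; ring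
  have hcb : c + r = b^2 := by rw [hr, hc]; ring
  set u : ℝ → ℝ := fun φ => c + r * Real.cos φ with hu
  have hupos : ∀ φ : ℝ, 0 < u φ := by
    intro φ
    have := Real.neg_one_le_cos φ
    have : c - r ≤ u φ := by rw [hu]; simp only; nlinarith
    nlinarith
  set f : ℝ → ℝ := fun φ => Real.sqrt (u φ) with hf
  have hfpos : ∀ φ, 0 < f φ := fun φ => Real.sqrt_pos.2 (hupos φ)
  have hfsq : ∀ φ, (f φ)^2 = u φ := fun φ => Real.sq_sqrt (hupos φ).le
  -- strict bounds of u on (0, π)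
  have hub : ∀ φ ∈ Set.Ioo (0:ℝ) π, a^2 < u φ ∧ u φ < b^2 := by
    intro φ hφ
    have hcos1 : Real.cos φ < 1 := by
      have := one_sub_cos_pos (u := φ) hφ.1.ne' (by linarith [hφ.1]) (by linarith [hφ.2])
      linarith
    have hcosm1 : -1 < Real.cos φ := by
      have := Real.strictAntiOn_cos ⟨hφ.1.le, hφ.2.le⟩ ⟨hpi.le, le_rfl⟩ hφ.2
      rwa [Real.cos_pi] at this
    constructor
    · rw [← hca, hu]; simp only; nlinarith
    · rw [← hcb, hu]; simp only; nlinarith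
  -- f is strictly decreasing on [0, π], hence injective on (0, π)
  have hanti : StrictAntiOn f (Set.Icc 0 π) := by
    intro x hx y hy hxy
    have hcos : Real.cos y < Real.cos x := Real.strictAntiOn_cos hx hy hxy
    have huy : u y < u x := by rw [hu]; simp only; nlinarith
    exact Real.sqrt_lt_sqrt (hupos y).le huy
  have hinj : Set.InjOn f (Set.Ioo 0 π) :=
    (hanti.injOn).mono (Set.Ioo_subset_Icc_self)
  -- image
  have himg : f '' Set.Ioo 0 π = Set.Ioo a b := by
    apply Set.Subset.antisymm
    · rintro y ⟨φ, hφ, rfl⟩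
      obtain ⟨h1, h2⟩ := hub φ hφ
      constructor
      · have := Real.sqrt_lt_sqrt (sq_nonneg a) h1
        rwa [Real.sqrt_sq ha.le] at this
      · have := Real.sqrt_lt_sqrt (hupos φ).le h2
        rwa [Real.sqrt_sq (by linarith : (0:ℝ) ≤ b)] at this
    · rintro y ⟨hy1, hy2⟩
      have hy0 : 0 < y := lt_trans ha hy1
      have hsq1 : a^2 < y^2 := by nlinarith
      have hsq2 : y^2 < b^2 := by nlinarith
      set t := (y^2 - c)/r with ht
      have ht1 : -1 < t := by rw [ht, lt_div_iff₀ hr0]; nlinarith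
      have ht2 : t < 1 := by rw [ht, div_lt_one hr0]; nlinarith
      refine ⟨Real.arccos t, ⟨?_, ?_⟩, ?_⟩
      · exact Real.arccos_pos.2 ht2
      · refine lt_of_le_of_ne (Real.arccos_le_pi t) fun h => ?_
        have := Real.arccos_eq_pi.1 h
        linarith
      · rw [hf, hu]
        simp only
        rw [Real.cos_arccos ht1.le ht2.le, ht]
        rw [mul_div_cancel₀ _ hr0.ne', add_sub_cancel]
        exact Real.sqrt_sq hy0.le
  -- derivative
  set f' : ℝ → ℝ := fun φ => -(r * Real.sin φ) / (2 * f φ) with hf'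
  have hderiv : ∀ φ ∈ Set.Ioo (0:ℝ) π, HasDerivWithinAt f (f' φ) (Set.Ioo 0 π) φ := by
    intro φ _
    have h1 : HasDerivAt u (-(r * Real.sin φ)) φ := by
      have := ((Real.hasDerivAt_cos φ).const_mul r).const_add c
      simpa [hu, mul_comm] using this
    have h2 : HasDerivAt f (1/(2 * Real.sqrt (u φ)) * -(r * Real.sin φ)) φ :=
      (Real.hasDerivAt_sqrt (hupos φ).ne').comp φ h1
    have : (1/(2 * Real.sqrt (u φ)) * -(r * Real.sin φ)) = f' φ := by
      rw [hf', hf]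
      field_simp
    exact (this ▸ h2).hasDerivWithinAt
  -- change of variables
  have hcov := MeasureTheory.integral_image_eq_integral_abs_deriv_smul
    measurableSet_Ioo hderiv hinj (fun y => deltaRho a b y * g y)
  rw [himg] at hcov
  rw [hcov]
  -- simplify the integrand on (0, π)
  have heq : Set.EqOn (fun φ => |f' φ| • (deltaRho a b (f φ) * g (f φ)))
      (fun φ => (2*π)⁻¹ * g (f φ)) (Set.Ioo 0 π) := by
    intro φ hφ
    have hsin : 0 < Real.sin φ := Real.sin_pos_of_pos_of_lt_pi hφ.1 hφ.2
    have hy := hfpos φ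
    have hba : (b^2 - (f φ)^2) = r * (1 - Real.cos φ) := by
      rw [hfsq, hu, ← hcb]; simp only; ring
    have hab2 : ((f φ)^2 - a^2) = r * (1 + Real.cos φ) := by
      rw [hfsq, hu, ← hca]; simp only; ring
    have hprod : (b^2 - (f φ)^2) * ((f φ)^2 - a^2) = (r * Real.sin φ)^2 := by
      rw [hba, hab2]
      have hpyth := Real.sin_sq_add_cos_sq φ
      linear_combination (-(r:ℝ)^2) * hpyth
    have hsqrt : Real.sqrt ((b^2 - (f φ)^2) * ((f φ)^2 - a^2)) = r * Real.sin φ := by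
      rw [hprod, Real.sqrt_sq (by positivity)]
    have habs : |f' φ| = (r * Real.sin φ) / (2 * f φ) := by
      rw [hf', abs_div, abs_neg, abs_of_pos (by positivity : (0:ℝ) < r * Real.sin φ),
        abs_of_pos (by positivity : (0:ℝ) < 2 * f φ)]
    simp only [smul_eq_mul]
    rw [habs, deltaRho, hsqrt]
    field_simp
  rw [MeasureTheory.setIntegral_congr_fun measurableSet_Ioo heq]
  rw [MeasureTheory.integral_const_mul]
  congr 1
  rw [intervalIntegral.integral_of_le hpi.le, MeasureTheory.integral_Ioc_eq_integral_Ioo]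

lemma intervalIntegrable_log_abs_cos_sub_cos {ψ : ℝ} (hψ : ψ ∈ Set.Ioo 0 π) :
    IntervalIntegrable (fun φ => Real.log |Real.cos ψ - Real.cos φ|) volume 0 π := by
  have hpi := Real.pi_pos
  obtain ⟨hψ0, hψπ⟩ := hψ
  set h : ℝ → ℝ := fun θ => Real.log (1 - Real.cos θ) with hh
  have int_sub : IntervalIntegrable (fun φ => h (φ - ψ)) volume 0 π := by
    have := (intervalIntegrable_log_one_sub_cos (a := -ψ) (b := π - ψ)
      (by linarith) (by linarith) (by linarith)).comp_sub_right ψ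
    simpa using this
  have int_add : IntervalIntegrable (fun φ => h (φ + ψ)) volume 0 π := by
    have := (intervalIntegrable_log_one_sub_cos' (a := ψ) (b := π + ψ)
      hψ0 (by linarith) (by linarith)).comp_add_right ψ
    simpa using this
  have hmaj : IntervalIntegrable (fun φ => (2:ℝ)⁻¹ * (h (φ - ψ) + h (φ + ψ))) volume 0 π :=
    (int_sub.add int_add).const_mul _
  rw [intervalIntegrable_iff_integrableOn_Ioc_of_le hpi.le] at hmaj ⊢
  apply hmaj.congr
  have h0 : ∀ᵐ (φ : ℝ), φ ∉ ({ψ} : Set ℝ) := compl_mem_ae_iff.2 (measure_singleton ψ)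
  refine (ae_restrict_iff' measurableSet_Ioc).2 ?_
  filter_upwards [h0] with φ hφψ hmem
  have hφψ' : φ ≠ ψ := by simpa using hφψ
  have hm1 : 0 < φ := hmem.1
  have hm2 : φ ≤ π := hmem.2
  have h1 : 0 < 1 - Real.cos (φ - ψ) :=
    one_sub_cos_pos (sub_ne_zero.2 hφψ') (by linarith) (by linarith)
  have h2 : 0 < 1 - Real.cos (φ + ψ) :=
    one_sub_cos_pos (by linarith : (0:ℝ) < φ + ψ).ne' (by linarith) (by linarith)
  have hkey : (Real.cos ψ - Real.cos φ)^2
      = (1 - Real.cos (φ - ψ)) * (1 - Real.cos (φ + ψ)) := by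
    rw [Real.cos_sub, Real.cos_add]
    nlinarith [Real.sin_sq_add_cos_sq φ, Real.sin_sq_add_cos_sq ψ]
  have hp : 2 * Real.log (Real.cos ψ - Real.cos φ) = h (φ - ψ) + h (φ + ψ) := by
    have hq := Real.log_pow (Real.cos ψ - Real.cos φ) 2
    rw [hkey, Real.log_mul h1.ne' h2.ne'] at hq
    push_cast at hq
    linarith
  rw [← Real.log_abs] at hp
  show (2:ℝ)⁻¹ * (h (φ - ψ) + h (φ + ψ)) = Real.log |Real.cos ψ - Real.cos φ|
  linarith


/-- Closed-form integrals against the density `δρ`: for all `x ∈ (a,b)`,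
`2∫_a^b δρ(y) log|x²−y²| dy = log((b²−a²)/4)`, and
`∫_a^b δρ(x) log x dx = (1/2) log((a+b)/2)`. -/

theorem deltaRho_log_integrals (a b : ℝ) (ha : 0 < a) (hab : a < b) :
    (∀ x ∈ Set.Ioo a b,
        2 * ∫ y in Set.Ioo a b, deltaRho a b y * Real.log |x ^ 2 - y ^ 2|
          = Real.log ((b ^ 2 - a ^ 2) / 4))
      ∧ (∫ x in Set.Ioo a b, deltaRho a b x * Real.log x)
          = (1 / 2) * Real.log ((a + b) / 2) := by
  have hpi := Real.pi_pos
  have hb0 : 0 < b := lt_trans ha hab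
  set c := (a^2+b^2)/2 with hc
  set r := (b^2-a^2)/2 with hr
  have hr0 : 0 < r := by rw [hr]; nlinarith
  have hcr : r < c := by rw [hr, hc]; nlinarith
  have hca : c - r = a^2 := by rw [hr, hc]; ring
  have hcb : c + r = b^2 := by rw [hr, hc]; ring
  have hupos : ∀ φ : ℝ, 0 < c + r * Real.cos φ := by
    intro φ
    have := Real.neg_one_le_cos φ
    nlinarith
  constructor
  · -- first identity
    intro x hx
    have hcov := deltaRho_cov a b ha hab (fun y => Real.log |x^2 - y^2|)
    rw [← hc, ← hr] at hcov
    rw [hcov]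
    have hsq : ∀ φ : ℝ, Real.sqrt (c + r * Real.cos φ)^2 = c + r * Real.cos φ :=
      fun φ => Real.sq_sqrt (hupos φ).le
    have hint1 : ∫ φ in (0:ℝ)..π, Real.log |x^2 - Real.sqrt (c + r * Real.cos φ)^2|
        = ∫ φ in (0:ℝ)..π, Real.log |x^2 - (c + r * Real.cos φ)| := by
      apply intervalIntegral.integral_congr
      intro φ _
      simp only [hsq]
    -- set up ψ
    have hx0 : 0 < x := lt_trans ha hx.1
    have hsq1 : a^2 < x^2 := by nlinarith [hx.1]
    have hsq2 : x^2 < b^2 := by nlinarith [hx.2]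
    set s := (x^2 - c)/r with hs
    have hs1 : -1 < s := by rw [hs, lt_div_iff₀ hr0]; nlinarith
    have hs2 : s < 1 := by rw [hs, div_lt_one hr0]; nlinarith
    set ψ := Real.arccos s with hψdef
    have hψ : ψ ∈ Set.Ioo 0 π := by
      constructor
      · exact Real.arccos_pos.2 hs2
      · refine lt_of_le_of_ne (Real.arccos_le_pi s) fun h => ?_
        have := Real.arccos_eq_pi.1 h
        linarith
    have hcosψ : Real.cos ψ = s := Real.cos_arccos hs1.le hs2.le
    have hxc : x^2 - c = r * Real.cos ψ := by
      rw [hcosψ, hs, mul_div_cancel₀ _ hr0.ne']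
    have hint2 : ∫ φ in (0:ℝ)..π, Real.log |x^2 - (c + r * Real.cos φ)|
        = ∫ φ in (0:ℝ)..π, (Real.log r + Real.log |Real.cos ψ - Real.cos φ|) := by
      apply intervalIntegral.integral_congr_ae
      have h0 : ∀ᵐ (φ : ℝ), φ ∉ ({ψ} : Set ℝ) := compl_mem_ae_iff.2 (measure_singleton ψ)
      filter_upwards [h0] with φ hφψ hmem
      rw [Set.uIoc_of_le hpi.le] at hmem
      have hφψ' : φ ≠ ψ := by simpa using hφψ
      have hccne : Real.cos ψ - Real.cos φ ≠ 0 := by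
        intro hcc
        have : Real.cos φ = Real.cos ψ := by linarith
        exact hφψ' (Real.injOn_cos ⟨hmem.1.le, hmem.2⟩ ⟨hψ.1.le, hψ.2.le⟩ this)
      have hxp : x^2 - (c + r * Real.cos φ) = r * (Real.cos ψ - Real.cos φ) := by
        rw [mul_sub, ← hxc]
        ring
      rw [hxp, abs_mul, abs_of_pos hr0,
        Real.log_mul hr0.ne' (by simpa [abs_ne_zero] using hccne)]
    rw [hint1, hint2]
    rw [intervalIntegral.integral_add intervalIntegrable_const
        (intervalIntegrable_log_abs_cos_sub_cos hψ),
      intervalIntegral.integral_const, integral_log_abs_cos_sub_cos hψ]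
    simp only [smul_eq_mul, sub_zero]
    have hlogr : Real.log ((b^2-a^2)/4) = Real.log r - Real.log 2 := by
      rw [show (b^2-a^2)/4 = r/2 by rw [hr]; ring, Real.log_div hr0.ne' two_ne_zero]
    rw [hlogr]
    have hπ0 : (π:ℝ) ≠ 0 := hpi.ne'
    field_simp
    ring
  · -- second identity
    have hcov := deltaRho_cov a b ha hab Real.log
    rw [← hc, ← hr] at hcov
    rw [hcov]
    have hint : ∫ φ in (0:ℝ)..π, Real.log (Real.sqrt (c + r * Real.cos φ))
        = ∫ φ in (0:ℝ)..π, Real.log (c + r * Real.cos φ) / 2 := by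
      apply intervalIntegral.integral_congr
      intro φ _
      simp only [Real.log_sqrt (hupos φ).le]
    rw [hint, intervalIntegral.integral_div, integral_log_c_add_r_cos hr0 hcr]
    have hd : Real.sqrt (c^2 - r^2) = a*b := by
      rw [show c^2 - r^2 = (a*b)^2 by rw [hc, hr]; ring]
      exact Real.sqrt_sq (by positivity)
    rw [hd]
    have hcab : (c + a*b)/2 = ((a+b)/2)^2 := by rw [hc]; ring
    rw [hcab]
    rw [Real.log_pow]
    push_cast
    have hπ0 : (π:ℝ) ≠ 0 := hpi.ne'
    field_simp
end

section
/- As p → ∞, the ladder coefficient sum satisfies ∑_{l=0}^{p} (2p−l)!/(p!·l!·(p−l)!) · c^l ~ 4^p·e^{c/2}/√(πp) for any fixed real c ≥ 0; in particular for c = 0, ∑ reduces to the central binomial coefficient C(2p,p) ~ 4^p/√(πp). -/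
open Finset Nat Real Filter Topology


noncomputable def ladF (c : ℝ) (p l : ℕ) : ℝ :=
  if l ≤ p then ((p.descFactorial l : ℝ) / ((2 * p).descFactorial l : ℝ)) * (c ^ l / (l ! : ℝ))
  else 0

lemma term_eq (c : ℝ) {p l : ℕ} (hl : l ≤ p) :
    (((2 * p - l)! : ℝ) / ((p ! : ℝ) * (l ! : ℝ) * ((p - l)! : ℝ))) * c ^ l
      = ((2 * p).choose p : ℝ) * ladF c p l := by
  have hl2 : l ≤ 2 * p := by omega
  have h1 : ((p - l)! * p.descFactorial l) = p ! := Nat.factorial_mul_descFactorial hl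
  have h2 : ((2 * p - l)! * (2 * p).descFactorial l) = (2 * p)! :=
    Nat.factorial_mul_descFactorial hl2
  have h3 : (2 * p).choose p * (p ! * p !) = (2 * p)! := by
    have := Nat.choose_mul_factorial_mul_factorial (show p ≤ 2 * p by omega)
    rw [two_mul, ← mul_assoc]
    simpa [two_mul, Nat.add_sub_cancel] using this
  have h1' : ((p - l)! : ℝ) * (p.descFactorial l : ℝ) = (p ! : ℝ) := by exact_mod_cast h1
  have h2' : (((2 * p - l)!) : ℝ) * ((2 * p).descFactorial l : ℝ) = ((2 * p)! : ℝ) := by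
    exact_mod_cast h2
  have h3' : ((2 * p).choose p : ℝ) * ((p ! : ℝ) * (p ! : ℝ)) = ((2 * p)! : ℝ) := by
    exact_mod_cast h3
  have f1 : ((p)! : ℝ) ≠ 0 := Nat.cast_ne_zero.mpr (Nat.factorial_ne_zero _)
  have f2 : ((l)! : ℝ) ≠ 0 := Nat.cast_ne_zero.mpr (Nat.factorial_ne_zero _)
  have f3 : (((p - l))! : ℝ) ≠ 0 := Nat.cast_ne_zero.mpr (Nat.factorial_ne_zero _)
  have f4 : (((2 * p - l))! : ℝ) ≠ 0 := Nat.cast_ne_zero.mpr (Nat.factorial_ne_zero _)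
  have f5 : ((2 * p).descFactorial l : ℝ) ≠ 0 := by
    intro h0
    rw [h0, mul_zero] at h2'
    exact (Nat.cast_ne_zero.mpr (Nat.factorial_ne_zero (2 * p))) h2'.symm
  rw [ladF, if_pos hl]
  have e1 : (p.descFactorial l : ℝ) = (p ! : ℝ) / ((p - l)! : ℝ) := by
    field_simp; linarith [h1']
  have e2 : ((2 * p).descFactorial l : ℝ) = ((2 * p)! : ℝ) / (((2 * p - l))! : ℝ) := by
    field_simp; linarith [h2']
  have e3 : ((2 * p).choose p : ℝ) = ((2 * p)! : ℝ) / ((p ! : ℝ) * (p ! : ℝ)) := by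
    field_simp; linarith [h3']
  have f6 : (((2 * p))! : ℝ) ≠ 0 := Nat.cast_ne_zero.mpr (Nat.factorial_ne_zero _)
  rw [e1, e2, e3]
  field_simp

lemma sum_eq (c : ℝ) (p : ℕ) :
    (∑ l ∈ Finset.range (p + 1),
        (((2 * p - l)! : ℝ) / ((p ! : ℝ) * (l ! : ℝ) * ((p - l)! : ℝ))) * c ^ l)
      = ((2 * p).choose p : ℝ) * ∑' l : ℕ, ladF c p l := by
  rw [tsum_eq_sum (s := Finset.range (p + 1)) (f := ladF c p)
      (fun l hl => by rw [ladF, if_neg]; simp at hl; omega),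
    Finset.mul_sum]
  refine Finset.sum_congr rfl fun l hl => ?_
  exact term_eq c (by simp at hl; omega)

lemma ratio_tendsto (l : ℕ) :
    Tendsto (fun p : ℕ => (p.descFactorial l : ℝ) / ((2 * p).descFactorial l : ℝ))
      atTop (𝓝 ((1 / 2 : ℝ) ^ l)) := by
  have key : ∀ᶠ p : ℕ in atTop,
      (p.descFactorial l : ℝ) / ((2 * p).descFactorial l : ℝ)
        = ∏ j ∈ Finset.range l, (((p : ℝ) - j) / (2 * (p : ℝ) - j)) := by
    filter_upwards [eventually_ge_atTop l] with p hp
    rw [Nat.descFactorial_eq_prod_range, Nat.descFactorial_eq_prod_range]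
    push_cast
    rw [← Finset.prod_div_distrib]
    refine Finset.prod_congr rfl fun j hj => ?_
    have hj' : j ≤ p := by simp at hj; omega
    have hj2 : j ≤ 2 * p := by omega
    rw [Nat.cast_sub hj', Nat.cast_sub hj2]
    push_cast
    ring_nf
  rw [show ((1 / 2 : ℝ)) ^ l = ∏ _j ∈ Finset.range l, (1 / 2 : ℝ) by simp]
  refine Tendsto.congr' (key.mono fun _ h => h.symm) ?_
  refine tendsto_finset_prod _ fun j _ => ?_
  have heq : ∀ᶠ p : ℕ in atTop,
      ((p : ℝ) - j) / (2 * (p : ℝ) - j) = (1 - j / (p : ℝ)) / (2 - j / (p : ℝ)) := by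
    filter_upwards [eventually_ge_atTop 1] with p hp
    have hp0 : (p : ℝ) ≠ 0 := by positivity
    field_simp
  refine Tendsto.congr' (heq.mono fun _ h => h.symm) ?_
  have hj : Tendsto (fun p : ℕ => (j : ℝ) / p) atTop (𝓝 0) :=
    tendsto_const_div_atTop_nhds_zero_nat _
  have h1 : Tendsto (fun p : ℕ => 1 - (j : ℝ) / p) atTop (𝓝 1) := by
    simpa using tendsto_const_nhds.sub hj
  have h2 : Tendsto (fun p : ℕ => 2 - (j : ℝ) / p) atTop (𝓝 2) := by
    simpa using tendsto_const_nhds.sub hj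
  exact h1.div h2 (by norm_num)

lemma tsum_tendsto (c : ℝ) (hc : 0 ≤ c) :
    Tendsto (fun p : ℕ => ∑' l : ℕ, ladF c p l) atTop (𝓝 (Real.exp (c / 2))) := by
  have hexp : Real.exp (c / 2) = ∑' l : ℕ, (c / 2) ^ l / (l ! : ℝ) := by
    rw [Real.exp_eq_exp_ℝ, NormedSpace.exp_eq_tsum_div]
  rw [hexp]
  refine tendsto_tsum_of_dominated_convergence (bound := fun l => c ^ l / (l ! : ℝ))
    (Real.summable_pow_div_factorial c) (fun l => ?_) ?_
  · -- pointwise convergence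
    have : ∀ᶠ p : ℕ in atTop, (p.descFactorial l : ℝ) / ((2 * p).descFactorial l : ℝ)
        * (c ^ l / (l ! : ℝ)) = ladF c p l := by
      filter_upwards [eventually_ge_atTop l] with p hp
      rw [ladF, if_pos hp]
    refine Tendsto.congr' this ?_
    have := (ratio_tendsto l).mul_const (c ^ l / (l ! : ℝ))
    convert this using 2
    simp only [div_pow, one_pow]
    ring
  · -- bound
    refine Eventually.of_forall fun p l => ?_
    simp only [ladF]
    split_ifs with hl
    · have hl2 : l ≤ 2 * p := by omega
      have hd2 : 0 < ((2 * p).descFactorial l : ℝ) := by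
        have h2 : ((2 * p - l)! * (2 * p).descFactorial l) = (2 * p)! :=
          Nat.factorial_mul_descFactorial hl2
        have : 0 < (2 * p).descFactorial l := by
          rcases Nat.eq_zero_or_pos ((2 * p).descFactorial l) with h | h
          · rw [h, mul_zero] at h2; exact absurd h2.symm (Nat.factorial_ne_zero _)
          · exact h
        exact_mod_cast this
      have hratio : (p.descFactorial l : ℝ) / ((2 * p).descFactorial l : ℝ) ≤ 1 := by
        rw [div_le_one hd2]
        exact_mod_cast Nat.descFactorial_le l (by omega)
      have hnn : 0 ≤ (p.descFactorial l : ℝ) / ((2 * p).descFactorial l : ℝ) := by positivity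
      have hterm : 0 ≤ c ^ l / (l ! : ℝ) := by positivity
      rw [Real.norm_eq_abs, abs_of_nonneg (by positivity)]
      calc (p.descFactorial l : ℝ) / ((2 * p).descFactorial l : ℝ) * (c ^ l / (l ! : ℝ))
          ≤ 1 * (c ^ l / (l ! : ℝ)) := by
            exact mul_le_mul_of_nonneg_right hratio hterm
        _ = c ^ l / (l ! : ℝ) := one_mul _
    · simp; positivity

lemma central_binom_tendsto :
    Tendsto (fun p : ℕ => ((2 * p).choose p : ℝ) / (4 ^ p / Real.sqrt (Real.pi * p)))
      atTop (𝓝 1) := by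
  have key : ∀ᶠ p : ℕ in atTop,
      Real.sqrt Real.pi * Stirling.stirlingSeq (2 * p) / Stirling.stirlingSeq p ^ 2
        = ((2 * p).choose p : ℝ) / (4 ^ p / Real.sqrt (Real.pi * p)) := by
    filter_upwards [eventually_ge_atTop 1] with p hp
    have hq : (0 : ℝ) < p := by exact_mod_cast hp
    have hE : (0 : ℝ) < Real.exp 1 := Real.exp_pos 1
    have hchoose : ((2 * p).choose p : ℝ) = ((2 * p)! : ℝ) / ((p ! : ℝ) * (p ! : ℝ)) := by
      have h3 : (2 * p).choose p * (p ! * p !) = (2 * p)! := by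
        rw [two_mul, ← mul_assoc]
        simpa [two_mul, Nat.add_sub_cancel] using
          Nat.choose_mul_factorial_mul_factorial (show p ≤ 2 * p by omega)
      have f1 : ((p)! : ℝ) ≠ 0 := Nat.cast_ne_zero.mpr (Nat.factorial_ne_zero _)
      rw [eq_div_iff (by positivity)]
      exact_mod_cast h3
    rw [Stirling.stirlingSeq, Stirling.stirlingSeq, hchoose]
    push_cast
    have h4q : Real.sqrt (2 * (2 * (p : ℝ))) = 2 * Real.sqrt p := by
      rw [show (2 : ℝ) * (2 * (p : ℝ)) = 4 * p by ring, Real.sqrt_mul (by norm_num),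
        show (4 : ℝ) = 2 ^ 2 by norm_num, Real.sqrt_sq (by norm_num)]
    have h2q : Real.sqrt (2 * (p : ℝ)) ^ 2 = 2 * p := Real.sq_sqrt (by positivity)
    have hpq : Real.sqrt (Real.pi * p) = Real.sqrt Real.pi * Real.sqrt p := Real.sqrt_mul pi_nonneg _
    have hpow : ((2 : ℝ) * p / Real.exp 1) ^ (2 * p) = 4 ^ p * ((p : ℝ) / Real.exp 1) ^ (2 * p) := by
      rw [show (2 : ℝ) * p / Real.exp 1 = 2 * ((p : ℝ) / Real.exp 1) by ring, mul_pow,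
        pow_mul, show ((2 : ℝ) ^ 2) = 4 by norm_num]
    rw [h4q, hpq, hpow]
    have hsq : (0 : ℝ) < Real.sqrt p := Real.sqrt_pos.mpr hq
    have hsp : (0 : ℝ) < Real.sqrt Real.pi := Real.sqrt_pos.mpr pi_pos
    have hf1 : ((p)! : ℝ) ≠ 0 := Nat.cast_ne_zero.mpr (Nat.factorial_ne_zero _)
    have hpe : ((p : ℝ) / Real.exp 1) ^ (2 * p) ≠ 0 := by positivity
    have h2qne : Real.sqrt (2 * (p : ℝ)) ≠ 0 := by positivity
    have hden : ((p ! : ℝ) / (Real.sqrt (2 * p) * ((p : ℝ) / Real.exp 1) ^ p)) ^ 2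
        = ((p ! : ℝ))^2 / ((2 * (p : ℝ)) * ((p : ℝ) / Real.exp 1) ^ (2 * p)) := by
      rw [div_pow, mul_pow, h2q, ← pow_mul, mul_comm p 2]
    rw [hden]
    have hqq : Real.sqrt (p : ℝ) * Real.sqrt (p : ℝ) = (p : ℝ) := Real.mul_self_sqrt (le_of_lt hq)
    field_simp
    ring_nf
    rw [Real.sq_sqrt hq.le]
  refine Tendsto.congr' key ?_
  have hs := Stirling.tendsto_stirlingSeq_sqrt_pi
  have h2 : Tendsto (fun p : ℕ => Stirling.stirlingSeq (2 * p)) atTop (𝓝 (Real.sqrt Real.pi)) :=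
    hs.comp (tendsto_atTop_mono (fun p => by simp [two_mul]) tendsto_id)
  have hsp : (0 : ℝ) < Real.sqrt Real.pi := Real.sqrt_pos.mpr pi_pos
  have hmain : Tendsto (fun p : ℕ => Real.sqrt Real.pi * Stirling.stirlingSeq (2 * p)
        / Stirling.stirlingSeq p ^ 2) atTop
      (𝓝 (Real.sqrt Real.pi * Real.sqrt Real.pi / Real.sqrt Real.pi ^ 2)) :=
    ((tendsto_const_nhds (x := Real.sqrt Real.pi)).mul h2).div (hs.pow 2) (by positivity)
  have hval : Real.sqrt Real.pi * Real.sqrt Real.pi / Real.sqrt Real.pi ^ 2 = 1 := by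
    rw [sq]; field_simp
  rw [hval] at hmain
  exact hmain

/-- Large-`p` asymptotics of the ladder coefficient sum: for fixed `c ≥ 0`,
`∑_{l=0}^p (2p−l)!/(p! l! (p−l)!) c^l ~ 4^p e^{c/2}/√(πp)` as `p → ∞`;
for `c = 0` this is the central binomial asymptotics `C(2p,p) ~ 4^p/√(πp)`. -/
theorem ladder_coefficient_sum_asymptotics (c : ℝ) (hc : 0 ≤ c) :
    Filter.Tendsto (fun p : ℕ =>
        (∑ l ∈ Finset.range (p + 1),
            (((2 * p - l)! : ℝ) / ((p ! : ℝ) * (l ! : ℝ) * ((p - l)! : ℝ))) * c ^ l)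
          / (4 ^ p * Real.exp (c / 2) / Real.sqrt (Real.pi * p)))
      Filter.atTop (𝓝 1) := by
  have hB := tsum_tendsto c hc
  have hC := central_binom_tendsto
  have key : ∀ᶠ p : ℕ in atTop,
      (((2 * p).choose p : ℝ) / (4 ^ p / Real.sqrt (Real.pi * p)))
          * ((∑' l : ℕ, ladF c p l) / Real.exp (c / 2))
        = (∑ l ∈ Finset.range (p + 1),
            (((2 * p - l)! : ℝ) / ((p ! : ℝ) * (l ! : ℝ) * ((p - l)! : ℝ))) * c ^ l)
          / (4 ^ p * Real.exp (c / 2) / Real.sqrt (Real.pi * p)) := by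
    filter_upwards [eventually_ge_atTop 1] with p hp
    rw [sum_eq c p]
    have hq : (0 : ℝ) < p := by exact_mod_cast hp
    have h1 : Real.sqrt (Real.pi * p) ≠ 0 := by positivity
    have h2 : Real.exp (c / 2) ≠ 0 := Real.exp_ne_zero _
    have h3 : ((4 : ℝ)) ^ p ≠ 0 := by positivity
    field_simp
  refine Tendsto.congr' key ?_
  have hlim := hC.mul (hB.div_const (Real.exp (c / 2)))
  simpa [div_self (Real.exp_ne_zero (c / 2))] using hlim
end

section
/- The large-argument asymptotics of the logarithm of the Barnes G-function restricted to the integers: for G(z+1) = ∏_{i=1}^{z−1} i!, one has log G(z+1) = (z²/2)·log z − (3/4)·z² + O(z·log z) as z → ∞ through the positive integers. -/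
open Finset Nat Real

noncomputable def Lf (n : ℕ) : ℝ := ∑ j ∈ range n, Real.log ((j : ℝ) + 1)
noncomputable def Mf (n : ℕ) : ℝ := ∑ j ∈ range n, ((j : ℝ) + 1) * Real.log ((j : ℝ) + 1)

lemma log_fact (n : ℕ) : Real.log (n ! : ℝ) = Lf n := by
  rw [← Finset.prod_range_add_one_eq_factorial]
  push_cast
  rw [Real.log_prod]
  · rfl
  · intro j _; positivity

lemma sum_log_fact (z : ℕ) : ∑ i ∈ range z, Real.log (i ! : ℝ) = z * Lf z - Mf z := by
  induction z with
  | zero => simp [Lf, Mf]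
  | succ n ih =>
      rw [Finset.sum_range_succ, ih, log_fact]
      have hL : Lf (n + 1) = Lf n + Real.log ((n : ℝ) + 1) := Finset.sum_range_succ _ n
      have hM : Mf (n + 1) = Mf n + ((n : ℝ) + 1) * Real.log ((n : ℝ) + 1) :=
        Finset.sum_range_succ _ n
      push_cast
      rw [hL, hM]; ring

lemma log_diff_le (n : ℕ) (hn : 1 ≤ n) :
    (n : ℝ) * (Real.log ((n : ℝ) + 1) - Real.log n) ≤ 1 := by
  have hx : (0:ℝ) < n := by exact_mod_cast hn
  have h : Real.log (((n : ℝ) + 1) / n) ≤ ((n : ℝ) + 1) / n - 1 :=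
    Real.log_le_sub_one_of_pos (by positivity)
  rw [Real.log_div (by positivity) (ne_of_gt hx)] at h
  have : ((n : ℝ) + 1) / n - 1 = 1 / n := by field_simp; ring
  rw [this] at h
  calc (n : ℝ) * (Real.log ((n : ℝ) + 1) - Real.log n) ≤ (n : ℝ) * (1 / n) := by
        exact mul_le_mul_of_nonneg_left h (le_of_lt hx)
    _ = 1 := by field_simp

lemma one_le_log_diff (n : ℕ) (hn : 1 ≤ n) :
    1 ≤ ((n : ℝ) + 1) * (Real.log ((n : ℝ) + 1) - Real.log n) := by
  have hx : (0:ℝ) < n := by exact_mod_cast hn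
  have h : 1 - (((n : ℝ) + 1) / n)⁻¹ ≤ Real.log (((n : ℝ) + 1) / n) :=
    Real.one_sub_inv_le_log_of_pos (by positivity)
  rw [Real.log_div (by positivity) (ne_of_gt hx)] at h
  have h2 : 1 - (((n : ℝ) + 1) / n)⁻¹ = 1 / ((n:ℝ) + 1) := by
    rw [inv_div]; field_simp; ring
  rw [h2] at h
  calc (1:ℝ) = ((n:ℝ)+1) * (1/((n:ℝ)+1)) := by field_simp
    _ ≤ ((n : ℝ) + 1) * (Real.log ((n : ℝ) + 1) - Real.log n) :=
        mul_le_mul_of_nonneg_left h (by positivity)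

lemma Lf_lower (n : ℕ) (hn : 1 ≤ n) :
    (n : ℝ) * Real.log n - n + 1 ≤ Lf n := by
  induction n with
  | zero => omega
  | succ k ih =>
      rcases Nat.eq_or_lt_of_le hn with h | h
      · simp [← h, Lf]
      · have hk : 1 ≤ k := by omega
        have ihk := ih hk
        have hd := log_diff_le k hk
        have hL : Lf (k + 1) = Lf k + Real.log ((k : ℝ) + 1) := Finset.sum_range_succ _ k
        push_cast
        rw [hL]
        nlinarith [hd]

lemma Lf_upper (n : ℕ) (hn : 1 ≤ n) :
    Lf n ≤ (n : ℝ) * Real.log n - n + 1 + Real.log n := by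
  induction n with
  | zero => omega
  | succ k ih =>
      rcases Nat.eq_or_lt_of_le hn with h | h
      · simp [← h, Lf]
      · have hk : 1 ≤ k := by omega
        have ihk := ih hk
        have hd := one_le_log_diff k hk
        have hL : Lf (k + 1) = Lf k + Real.log ((k : ℝ) + 1) := Finset.sum_range_succ _ k
        push_cast
        rw [hL]
        nlinarith [hd]

lemma Mf_lower (n : ℕ) (hn : 1 ≤ n) :
    (n : ℝ)^2 / 2 * Real.log n - (n : ℝ)^2 / 4 + 1/4 ≤ Mf n := by
  induction n with
  | zero => omega
  | succ k ih =>
      rcases Nat.eq_or_lt_of_le hn with h | h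
      · norm_num [← h, Mf]
      · have hk : 1 ≤ k := by omega
        have ihk := ih hk
        have hd := log_diff_le k hk
        have hM : Mf (k + 1) = Mf k + ((k : ℝ) + 1) * Real.log ((k : ℝ) + 1) :=
          Finset.sum_range_succ _ k
        have hlogk : 0 ≤ Real.log k := Real.log_nonneg (by exact_mod_cast hk)
        have hkr : (1:ℝ) ≤ k := by exact_mod_cast hk
        have hmono : (0:ℝ) ≤ Real.log ((k:ℝ)+1) - Real.log k :=
          sub_nonneg.2 (Real.log_le_log (by positivity) (by linarith))
        have hkD : ((k:ℝ) - 1) * ((k:ℝ) * (Real.log ((k : ℝ) + 1) - Real.log k)) ≤ ((k:ℝ)-1) * 1 :=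
          mul_le_mul_of_nonneg_left hd (by linarith)
        push_cast
        rw [hM]
        nlinarith [hd, hlogk, hkr, hmono, hkD]

lemma Mf_upper (n : ℕ) (hn : 1 ≤ n) :
    Mf n ≤ (n : ℝ)^2 / 2 * Real.log n - (n : ℝ)^2 / 4 + n + (n : ℝ)/2 * Real.log n := by
  induction n with
  | zero => omega
  | succ k ih =>
      rcases Nat.eq_or_lt_of_le hn with h | h
      · norm_num [← h, Mf]
      · have hk : 1 ≤ k := by omega
        have ihk := ih hk
        have hd := one_le_log_diff k hk
        have hM : Mf (k + 1) = Mf k + ((k : ℝ) + 1) * Real.log ((k : ℝ) + 1) :=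
          Finset.sum_range_succ _ k
        have hkr : (1:ℝ) ≤ k := by exact_mod_cast hk
        have hmono : Real.log k ≤ Real.log ((k:ℝ)+1) :=
          Real.log_le_log (by positivity) (by linarith)
        push_cast
        rw [hM]
        have hmul : (0:ℝ) ≤ ((k:ℝ)/2) * (((k : ℝ) + 1) * (Real.log ((k : ℝ) + 1) - Real.log k) - 1) :=
          mul_nonneg (by linarith) (by linarith)
        have hlogk : 0 ≤ Real.log k := Real.log_nonneg (by exact_mod_cast hk)
        nlinarith [hd, hkr, hmono, hmul, hlogk]

/-- Large-argument asymptotics of the logarithm of the Barnes G-function on the integers: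
with `G(z+1) = ∏_{i=0}^{z−1} i!`, one has
`log G(z+1) = (z²/2) log z − (3/4) z² + O(z log z)` as `z → ∞` through the integers. -/
theorem barnesG_log_asymptotics :
    ∃ C : ℝ, ∃ z₀ : ℕ, ∀ z : ℕ, z₀ ≤ z →
      |Real.log ((∏ i ∈ Finset.range z, i ! : ℕ) : ℝ)
          - (z ^ 2 / 2) * Real.log z + (3 / 4) * z ^ 2|
        ≤ C * z * Real.log z := by
  refine ⟨2, 3, fun z hz => ?_⟩
  have hz1 : 1 ≤ z := by omega
  have hzr : (3:ℝ) ≤ z := by exact_mod_cast hz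
  have hz0 : (0:ℝ) < z := by linarith
  have hlog1 : 1 ≤ Real.log z := by
    rw [Real.le_log_iff_exp_le hz0]
    calc Real.exp 1 ≤ 2.7182818286 := (Real.exp_one_lt_d9).le
      _ ≤ 3 := by norm_num
      _ ≤ z := hzr
  have h1 : Real.log ((∏ i ∈ Finset.range z, i ! : ℕ) : ℝ)
      = (z : ℝ) * Lf z - Mf z := by
    rw [← sum_log_fact]
    push_cast
    rw [Real.log_prod]
    intro i _; positivity
  rw [h1]
  have hLl := Lf_lower z hz1
  have hLu := Lf_upper z hz1
  have hMl := Mf_lower z hz1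
  have hMu := Mf_upper z hz1
  have hzLl : (z:ℝ) * ((z : ℝ) * Real.log z - z + 1) ≤ (z:ℝ) * Lf z :=
    mul_le_mul_of_nonneg_left hLl (le_of_lt hz0)
  have hzLu : (z:ℝ) * Lf z ≤ (z:ℝ) * ((z : ℝ) * Real.log z - z + 1 + Real.log z) :=
    mul_le_mul_of_nonneg_left hLu (le_of_lt hz0)
  rw [abs_le]
  constructor
  · nlinarith [hzLl, hMu, hlog1, hzr]
  · nlinarith [hzLu, hMl, hlog1, hzr]
end
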